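/- arXiv:0711.0097 — 7 statements merged into one kernel-verified Lean document; each statement's English description precedes it below -/
import Mathlib

section
/- Let K be a commutative ring with 1 and G a group. For x ∈ V(KG) and y ∈ V_*(KG), the conjugate x⁻¹yx lies in V_*(KG) if and only if xx* commutes with y. -/
open MonoidAlgebra

variable (K G : Type*) [CommRing K] [Group G]

/-- The augmentation homomorphism of the group algebra `K[G]`. -/
noncomputable def aug : MonoidAlgebra K G →* K :=
  ((MonoidAlgebra.lift K K G) 1 : MonoidAlgebra K G →ₐ[K] K).toMonoidHom

/-- The group `V(KG)` of normalized units of the group algebra `K[G]`. -/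
noncomputable def V : Subgroup (MonoidAlgebra K G)ˣ :=
  (Units.map (aug K G)).ker

/-- The canonical involutive anti-automorphism `a ↦ a*` of the group algebra,
obtained by extending `g ↦ g⁻¹` linearly. -/
noncomputable def gstar : MonoidAlgebra K G → MonoidAlgebra K G :=
  MonoidAlgebra.mapDomain (fun g : G => g⁻¹)

variable {K G}

lemma gstar_one : gstar K G 1 = 1 := by
  unfold gstar
  rw [MonoidAlgebra.one_def, MonoidAlgebra.mapDomain_single, inv_one]

lemma gstar_gstar (a : MonoidAlgebra K G) : gstar K G (gstar K G a) = a := by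
  unfold gstar
  ext g
  simp [MonoidAlgebra.mapDomain, ← Finsupp.mapDomain_comp]

lemma gstar_mul (a b : MonoidAlgebra K G) :
    gstar K G (a * b) = gstar K G b * gstar K G a := by
  induction a using MonoidAlgebra.induction_linear with
  | zero => simp [gstar, MonoidAlgebra.mapDomain_zero]
  | add f g hf hg =>
      simp only [gstar, add_mul, MonoidAlgebra.mapDomain_add] at hf hg ⊢
      rw [hf, hg, mul_add]
  | single g c =>
    induction b using MonoidAlgebra.induction_linear with
    | zero => simp [gstar, MonoidAlgebra.mapDomain_zero]
    | add f' g' hf hg =>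
        simp only [gstar, mul_add, MonoidAlgebra.mapDomain_add] at hf hg ⊢
        rw [hf, hg, add_mul]
    | single h d =>
      rw [MonoidAlgebra.single_mul_single]
      unfold gstar
      simp only [MonoidAlgebra.mapDomain_single, mul_inv_rev]
      rw [MonoidAlgebra.single_mul_single, mul_comm d c]

variable (K G)

/-- The subgroup of unitary units: units `u` with `u* = u⁻¹`. -/
noncomputable def unitaryUnits : Subgroup (MonoidAlgebra K G)ˣ where
  carrier := {u | gstar K G ↑u = ↑u⁻¹}
  one_mem' := by simpa using gstar_one
  mul_mem' := by
    intro u v hu hv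
    show gstar K G ↑(u * v) = ↑(u * v)⁻¹
    rw [Units.val_mul, gstar_mul, hu, hv, mul_inv_rev, Units.val_mul]
  inv_mem' := by
    intro u hu
    have hu' : gstar K G ↑u = ↑u⁻¹ := hu
    show gstar K G ↑u⁻¹ = ↑u⁻¹⁻¹
    rw [inv_inv, ← hu', gstar_gstar]

/-- The group `V_*(KG)` of unitary normalized units. -/
noncomputable def Vstar : Subgroup (MonoidAlgebra K G)ˣ :=
  V K G ⊓ unitaryUnits K G

/-- `x ∈ K[G]` is *unitary* if it is invertible with `x* = x⁻¹`,
equivalently `x ⬝ x* = x* ⬝ x = 1`. -/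
def IsUnitaryElem (x : MonoidAlgebra K G) : Prop :=
  x * gstar K G x = 1 ∧ gstar K G x * x = 1

/-- `ḡ`: the sum in `K[G]` of the distinct powers of `g`. -/
noncomputable def gbar (g : G) : MonoidAlgebra K G :=
  ∑ i ∈ Finset.range (orderOf g), (MonoidAlgebra.of K G g) ^ i

/-- The bicyclic unit `u_{g,h} = 1 + (g-1)hḡ`. -/
noncomputable def bicyclic (g h : G) : MonoidAlgebra K G :=
  1 + (MonoidAlgebra.of K G g - 1) * MonoidAlgebra.of K G h * gbar K G g

/-!
Conjugation preserves `V(KG)`, the kernel of the augmentation, so only unitarity is at stake.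
Since `*` is an anti-automorphism, `(x⁻¹yx)* = x* y⁻¹ (x*)⁻¹`, and this equals
`(x⁻¹yx)⁻¹ = x⁻¹ y⁻¹ x` exactly when `xx*` commutes with `y⁻¹`, i.e. with `y`.
-/

theorem inv_mul_mul_eq_mul_mul_inv_iff_commute {H : Type*} [Group H] (x w z : H) :
    x⁻¹ * z * x = w * z * w⁻¹ ↔ Commute (x * w) z := by
  rw [eq_mul_inv_iff_mul_eq, mul_assoc, mul_assoc, inv_mul_eq_iff_eq_mul, ← mul_assoc x, eq_comm]
  rfl

instance V.normal : (V K G).Normal :=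
  MonoidHom.normal_ker _

variable {K G}

noncomputable def gstarUnit (u : (MonoidAlgebra K G)ˣ) : (MonoidAlgebra K G)ˣ where
  val := gstar K G u
  inv := gstar K G ↑u⁻¹
  val_inv := by rw [← gstar_mul, Units.inv_mul, gstar_one]
  inv_val := by rw [← gstar_mul, Units.mul_inv, gstar_one]

@[simp]
theorem val_gstarUnit (u : (MonoidAlgebra K G)ˣ) :
    (gstarUnit u : MonoidAlgebra K G) = gstar K G u :=
  rfl

theorem gstarUnit_mul (u v : (MonoidAlgebra K G)ˣ) :
    gstarUnit (u * v) = gstarUnit v * gstarUnit u :=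
  Units.ext (gstar_mul _ _)

theorem gstarUnit_inv (u : (MonoidAlgebra K G)ˣ) : gstarUnit u⁻¹ = (gstarUnit u)⁻¹ :=
  rfl

theorem mem_unitaryUnits_iff {u : (MonoidAlgebra K G)ˣ} :
    u ∈ unitaryUnits K G ↔ gstarUnit u = u⁻¹ :=
  (Units.ext_iff (u := gstarUnit u) (v := u⁻¹)).symm

theorem conj_mem_unitaryUnits_iff {x y : (MonoidAlgebra K G)ˣ} (hy : y ∈ unitaryUnits K G) :
    x⁻¹ * y * x ∈ unitaryUnits K G ↔
      Commute ((x : MonoidAlgebra K G) * gstar K G x) (y : MonoidAlgebra K G) := by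
  rw [mem_unitaryUnits_iff] at hy ⊢
  have hconj : gstarUnit (x⁻¹ * y * x) = gstarUnit x * y⁻¹ * (gstarUnit x)⁻¹ := by
    rw [gstarUnit_mul, gstarUnit_mul, gstarUnit_inv, hy, mul_assoc]
  rw [hconj, mul_inv_rev, mul_inv_rev, inv_inv, ← mul_assoc, eq_comm,
    inv_mul_mul_eq_mul_mul_inv_iff_commute, Commute.inv_right_iff, ← Commute.units_val_iff,
    Units.val_mul, val_gstarUnit]

theorem conj_mem_Vstar_iff_general (K : Type*) [CommRing K] (G : Type*) [Group G]
    (x y : (MonoidAlgebra K G)ˣ) (hy : y ∈ Vstar K G) :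
    x⁻¹ * y * x ∈ Vstar K G ↔
      Commute ((x : MonoidAlgebra K G) * gstar K G x) (y : MonoidAlgebra K G) := by
  obtain ⟨hyV, hyU⟩ := Subgroup.mem_inf.mp hy
  have hconjV : x⁻¹ * y * x ∈ V K G := (V.normal K G).conj_mem' y hyV x
  rw [Vstar, Subgroup.mem_inf, and_iff_right hconjV]
  exact conj_mem_unitaryUnits_iff hyU

/-- **Lemma 2.1**: For `x ∈ V(KG)` and `y ∈ V_*(KG)`, we have `x⁻¹yx ∈ V_*(KG)` iff
`xx*` commutes with `y`. -/
theorem conj_mem_Vstar_iff (K : Type*) [CommRing K] (G : Type*) [Group G]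
    (x y : (MonoidAlgebra K G)ˣ) (hx : x ∈ V K G) (hy : y ∈ Vstar K G) :
    x⁻¹ * y * x ∈ Vstar K G ↔
      Commute ((x : MonoidAlgebra K G) * gstar K G x) (y : MonoidAlgebra K G) :=
  conj_mem_Vstar_iff_general K G x y hy
end

section
/- Every group G is a direct product E × H of an elementary abelian 2-group E and a group H which has no direct factor of order 2. Moreover, if G = E₁ × H₁ is another such decomposition of G, then E₁ ≅ E and H₁ ≅ H. -/
/-- An elementary abelian 2-group: abelian with every element of order at most 2. -/
def IsElemAb2 (E : Type*) [Group E] : Prop :=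
  (∀ x : E, x ^ 2 = 1) ∧ ∀ x y : E, x * y = y * x

/-- `G` is the (internal) direct product of its subgroups `E` and `H`. -/
def IsDirectProdDecomp {G : Type*} [Group G] (E H : Subgroup G) : Prop :=
  E.Normal ∧ H.Normal ∧ Disjoint E H ∧ E ⊔ H = ⊤

/-- `H` has a direct factor of order 2. -/
def HasC2DirectFactor (H : Type*) [Group H] : Prop :=
  ∃ C K : Subgroup H, IsDirectProdDecomp C K ∧ Nat.card C = 2

/-!
Let `S` be the subgroup generated by squares and `V` the subgroup of central elements `z` with
`z ^ 2 = 1`. If `G = E × H` with `E` elementary abelian, then `E ≤ V` and `S` is the square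
subgroup of `H`. A group has a direct factor of order 2 exactly when some element of `V` lies
outside `S`, so such an `H` has no direct factor of order 2 iff `V ⊓ H ≤ S`.

For existence, take `E` a complement of `V ⊓ S` in the `𝔽₂`-vector space `V`, and `H` the preimage
of a complement of the image of `E` in the `𝔽₂`-vector space `G ⧸ S`. For uniqueness, two such
decompositions `E × H` and `E₁ × H₁` can be exchanged: `G = E₁ × H = E × H₁`, hence
`E₁ ≅ G ⧸ H ≅ E` and `H₁ ≅ G ⧸ E ≅ H`.
-/

open Subgroup

section ExponentTwo

variable {P : Type*} [Group P]

theorem commute_of_forall_sq_eq_one (h : ∀ x : P, x ^ 2 = 1) (a b : P) : Commute a b :=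
  Commute.of_orderOf_dvd_two (fun y ↦ orderOf_dvd_of_pow_eq_one (h y)) a b

theorem Subgroup.le_center_of_forall_sq_eq_one (h : ∀ x : P, x ^ 2 = 1) (K : Subgroup P) :
    K ≤ center P := fun x _ ↦
  mem_center_iff.2 fun g ↦ (commute_of_forall_sq_eq_one h g x).eq

theorem Subgroup.normal_of_le_center {K : Subgroup P} (hK : K ≤ center P) : K.Normal :=
  ⟨fun n hn g ↦ by rwa [mem_center_iff.1 (hK hn) g, mul_inv_cancel_right]⟩

theorem Subgroup.exists_isCompl_of_forall_sq_eq_one (h : ∀ x : P, x ^ 2 = 1) (W : Subgroup P) :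
    ∃ E : Subgroup P, IsCompl E W := by
  let _ : CommGroup P := { mul_comm := fun a b ↦ (commute_of_forall_sq_eq_one h a b).eq }
  let _ : Module (ZMod 2) (Additive P) := AddCommGroup.zmodModule fun x ↦ h x.toMul
  let f : Subgroup P ≃o Submodule (ZMod 2) (Additive P) :=
    Subgroup.toAddSubgroup.trans (AddSubgroup.toZModSubmodule 2)
  obtain ⟨F, hF⟩ := Submodule.exists_isCompl (f W)
  exact ⟨f.symm F, by rw [f.isCompl_iff, f.apply_symm_apply]; exact hF.symm⟩

theorem zpow_eq_one_or_self_of_sq_eq_one {z : P} (hz : z ^ 2 = 1) (k : ℤ) :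
    z ^ k = 1 ∨ z ^ k = z := by
  obtain ⟨m, rfl | rfl⟩ := Int.even_or_odd' k
  · left; simp [zpow_mul, hz]
  · right; simp [zpow_add, zpow_mul, hz]

end ExponentTwo

section

variable {G : Type*} [Group G]

variable (G) in
def sqSubgroup : Subgroup G :=
  closure {x | ∃ g : G, g ^ 2 = x}

theorem sq_mem_sqSubgroup (g : G) : g ^ 2 ∈ sqSubgroup G :=
  subset_closure ⟨g, rfl⟩

theorem sqSubgroup_le {K : Subgroup G} (h : ∀ g : G, g ^ 2 ∈ K) : sqSubgroup G ≤ K :=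
  (closure_le K).2 fun _ ⟨g, hg⟩ ↦ hg ▸ h g

instance sqSubgroup_normal : (sqSubgroup G).Normal := by
  suffices h : {x | ∃ g : G, g ^ 2 = x} = Group.conjugatesOfSet {x | ∃ g : G, g ^ 2 = x} by
    rw [sqSubgroup, h]
    exact normalClosure_normal
  refine Set.Subset.antisymm Group.subset_conjugatesOfSet fun a ha ↦ ?_
  simp_rw [Group.mem_conjugatesOfSet_iff, isConj_iff] at ha
  obtain ⟨_, ⟨g, rfl⟩, c, rfl⟩ := ha
  exact ⟨c * g * c⁻¹, conj_pow⟩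

theorem map_subtype_sqSubgroup_le (H : Subgroup G) :
    (sqSubgroup H).map H.subtype ≤ sqSubgroup G :=
  map_le_iff_le_comap.2 <| sqSubgroup_le fun h ↦ sq_mem_sqSubgroup (h : G)

theorem quotient_sqSubgroup_sq_eq_one (x : G ⧸ sqSubgroup G) : x ^ 2 = 1 :=
  QuotientGroup.induction_on x fun g ↦ (QuotientGroup.eq_one_iff _).2 (sq_mem_sqSubgroup g)

variable (G) in
def centerTwoTorsion : Subgroup G where
  carrier := {x | x ∈ center G ∧ x ^ 2 = 1}
  one_mem' := ⟨one_mem _, one_pow 2⟩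
  mul_mem' := fun ⟨ha, ha2⟩ ⟨hb, hb2⟩ ↦
    ⟨mul_mem ha hb, by rw [Commute.mul_pow (mem_center_iff.1 hb _) 2, ha2, hb2, one_mul]⟩
  inv_mem' := fun ⟨ha, ha2⟩ ↦ ⟨inv_mem ha, by rw [inv_pow, ha2, inv_one]⟩

theorem centerTwoTorsion_le_center : centerTwoTorsion G ≤ center G := fun _ hx ↦ hx.1

theorem isElemAb2_of_le_centerTwoTorsion {E : Subgroup G} (hE : E ≤ centerTwoTorsion G) :
    IsElemAb2 E :=
  ⟨fun x ↦ Subtype.ext (hE x.2).2,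
    fun x y ↦ Subtype.ext (mem_center_iff.1 (hE x.2).1 y).symm⟩

theorem Subgroup.disjoint_zpowers_of_sq_eq_one {z : G} {K : Subgroup G} (hz : z ^ 2 = 1)
    (hzK : z ∉ K) : Disjoint (zpowers z) K := by
  rw [disjoint_def]
  rintro _ ⟨k, rfl⟩ hk
  exact (zpow_eq_one_or_self_of_sq_eq_one hz k).resolve_right fun h ↦ hzK (h ▸ hk)

theorem isElemAb2_of_card_eq_two {C : Type*} [Group C] (hC : Nat.card C = 2) : IsElemAb2 C :=
  have h : ∀ x : C, x ^ 2 = 1 := fun _ ↦ hC ▸ pow_card_eq_one'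
  ⟨h, fun x y ↦ (commute_of_forall_sq_eq_one h x y).eq⟩

namespace IsDirectProdDecomp

variable {E H : Subgroup G}

theorem symm (d : IsDirectProdDecomp E H) : IsDirectProdDecomp H E :=
  ⟨d.2.1, d.1, d.2.2.1.symm, sup_comm E H ▸ d.2.2.2⟩

theorem exists_mul_eq (d : IsDirectProdDecomp E H) (g : G) : ∃ e ∈ E, ∃ h ∈ H, e * h = g :=
  have := d.2.1
  mem_sup_of_normal_right.1 (d.2.2.2 ▸ mem_top g)

theorem isComplement' (d : IsDirectProdDecomp E H) : E.IsComplement' H := by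
  have := d.2.1
  refine isComplement'_of_disjoint_and_mul_eq_univ d.2.2.1 ?_
  rw [← mul_normal, d.2.2.2, coe_top]

theorem nonempty_mulEquiv_left {E' : Subgroup G} (d : IsDirectProdDecomp E H)
    (d' : IsDirectProdDecomp E' H) : Nonempty (E ≃* E') :=
  have := d.2.1
  ⟨d.isComplement'.QuotientMulEquiv.symm.trans d'.isComplement'.QuotientMulEquiv⟩

theorem le_centerTwoTorsion (d : IsDirectProdDecomp E H) (he : IsElemAb2 E) :
    E ≤ centerTwoTorsion G := by
  intro x hx
  refine ⟨mem_center_iff.2 fun g ↦ ?_, congrArg Subtype.val (he.1 ⟨x, hx⟩)⟩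
  obtain ⟨e, he', h, hh, rfl⟩ := d.exists_mul_eq g
  have hxe : Commute e x := congrArg Subtype.val (he.2 ⟨e, he'⟩ ⟨x, hx⟩)
  have hxh : Commute x h := commute_of_normal_of_disjoint E H d.1 d.2.1 d.2.2.1 x h hx hh
  exact (hxe.mul_left hxh.symm).eq

theorem sqSubgroup_eq_map (d : IsDirectProdDecomp E H) (he : IsElemAb2 E) :
    sqSubgroup G = (sqSubgroup H).map H.subtype := by
  refine le_antisymm (sqSubgroup_le fun g ↦ ?_) (map_subtype_sqSubgroup_le H)
  obtain ⟨e, he', h, hh, rfl⟩ := d.exists_mul_eq g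
  have heh : Commute e h := (mem_center_iff.1 (d.le_centerTwoTorsion he he').1 h).symm
  rw [heh.mul_pow, (d.le_centerTwoTorsion he he').2, one_mul]
  exact ⟨⟨h, hh⟩ ^ 2, sq_mem_sqSubgroup _, rfl⟩

theorem sqSubgroup_le_right (d : IsDirectProdDecomp E H) (he : IsElemAb2 E) :
    sqSubgroup G ≤ H :=
  d.sqSubgroup_eq_map he ▸ map_subtype_le _

theorem map_subtype_centerTwoTorsion (d : IsDirectProdDecomp E H) (he : IsElemAb2 E) :
    (centerTwoTorsion H).map H.subtype = centerTwoTorsion G ⊓ H := by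
  ext z
  constructor
  · rintro ⟨z, ⟨hzc, hz2⟩, rfl⟩
    refine ⟨⟨mem_center_iff.2 fun g ↦ ?_, congrArg Subtype.val hz2⟩, z.2⟩
    obtain ⟨e, he', h, hh, rfl⟩ := d.exists_mul_eq g
    have hze : Commute e z := (mem_center_iff.1 (d.le_centerTwoTorsion he he').1 z).symm
    have hzh : Commute h z := congrArg Subtype.val (mem_center_iff.1 hzc ⟨h, hh⟩)
    exact (hze.mul_left hzh).eq
  · rintro ⟨⟨hzc, hz2⟩, hzH⟩
    exact ⟨⟨z, hzH⟩, ⟨mem_center_iff.2 fun h ↦ Subtype.ext (mem_center_iff.1 hzc h),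
      Subtype.ext hz2⟩, rfl⟩

end IsDirectProdDecomp

theorem exists_isDirectProdDecomp_of_le_center {E : Subgroup G} (hE : E ≤ center G)
    (hES : Disjoint E (sqSubgroup G)) : ∃ H, IsDirectProdDecomp E H := by
  let π := QuotientGroup.mk' (sqSubgroup G)
  obtain ⟨K, hK⟩ := exists_isCompl_of_forall_sq_eq_one quotient_sqSubgroup_sq_eq_one (E.map π)
  have := normal_of_le_center (le_center_of_forall_sq_eq_one quotient_sqSubgroup_sq_eq_one K)
  refine ⟨K.comap π, normal_of_le_center hE, normal_comap π, disjoint_def.2 fun hxE hxK ↦ ?_, ?_⟩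
  · have hx : π _ = 1 := disjoint_def.1 hK.disjoint hxK (mem_map_of_mem π hxE)
    exact disjoint_def.1 hES hxE ((QuotientGroup.eq_one_iff _).1 hx)
  · have h := comap_sup_eq π (E.map π) K (QuotientGroup.mk'_surjective _)
    rwa [hK.symm.sup_eq_top, comap_top, comap_map_eq, sup_assoc,
      sup_eq_right.2 (ker_le_comap π K)] at h

theorem not_hasC2DirectFactor_iff :
    ¬ HasC2DirectFactor G ↔ centerTwoTorsion G ≤ sqSubgroup G := by
  constructor
  · intro hno z hz
    by_contra hzS
    have hz1 : z ≠ 1 := by rintro rfl; exact hzS (one_mem _)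
    obtain ⟨K, d⟩ := exists_isDirectProdDecomp_of_le_center
      ((zpowers_le.2 hz).trans centerTwoTorsion_le_center) (disjoint_zpowers_of_sq_eq_one hz.2 hzS)
    exact hno ⟨_, K, d, by rw [Nat.card_zpowers, orderOf_eq_prime hz.2 hz1]⟩
  · rintro hVS ⟨C, K, d, hC⟩
    have hC2 := isElemAb2_of_card_eq_two hC
    obtain ⟨z, hzC, hz1⟩ := C.bot_or_exists_ne_one.resolve_left fun h ↦ by simp [h] at hC
    exact hz1 (disjoint_def.1 d.2.2.1 hzC
      (d.sqSubgroup_le_right hC2 (hVS (d.le_centerTwoTorsion hC2 hzC))))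

theorem IsDirectProdDecomp.not_hasC2DirectFactor_iff {E H : Subgroup G}
    (d : IsDirectProdDecomp E H) (he : IsElemAb2 E) :
    ¬ HasC2DirectFactor H ↔ centerTwoTorsion G ⊓ H ≤ sqSubgroup G := by
  rw [_root_.not_hasC2DirectFactor_iff, ← map_le_map_iff_of_injective H.subtype_injective,
    d.map_subtype_centerTwoTorsion he, ← d.sqSubgroup_eq_map he]

theorem IsDirectProdDecomp.exchange {E₁ H₁ E H : Subgroup G} (d₁ : IsDirectProdDecomp E₁ H₁)
    (he₁ : IsElemAb2 E₁) (hno₁ : ¬ HasC2DirectFactor H₁) (d : IsDirectProdDecomp E H)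
    (he : IsElemAb2 E) (hno : ¬ HasC2DirectFactor H) : IsDirectProdDecomp E₁ H := by
  have hE₁V := d₁.le_centerTwoTorsion he₁
  have hEV := d.le_centerTwoTorsion he
  have hVH := (d.not_hasC2DirectFactor_iff he).1 hno
  have hVH₁ := (d₁.not_hasC2DirectFactor_iff he₁).1 hno₁
  refine ⟨d₁.1, d.2.1, disjoint_def.2 fun hxE₁ hxH ↦ ?_, ?_⟩
  · exact disjoint_def.1 d₁.2.2.1 hxE₁ (d₁.sqSubgroup_le_right he₁ (hVH ⟨hE₁V hxE₁, hxH⟩))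
  · rw [eq_top_iff, ← d.2.2.2]
    refine sup_le (fun e heE ↦ ?_) le_sup_right
    obtain ⟨e₁, he₁E, h₁, hh₁, rfl⟩ := d₁.exists_mul_eq e
    have hh₁V : h₁ ∈ centerTwoTorsion G := by
      simpa using mul_mem (inv_mem (hE₁V he₁E)) (hEV heE)
    exact mul_mem_sup he₁E (d.sqSubgroup_le_right he (hVH₁ ⟨hh₁V, hh₁⟩))

variable (G) in
theorem exists_complement_of_sqSubgroup_in_centerTwoTorsion :
    ∃ E ≤ centerTwoTorsion G, Disjoint E (sqSubgroup G) ∧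
      centerTwoTorsion G ≤ E ⊔ sqSubgroup G := by
  set V := centerTwoTorsion G
  obtain ⟨F, hF⟩ := exists_isCompl_of_forall_sq_eq_one (fun x : V ↦ Subtype.ext x.2.2)
    ((sqSubgroup G).subgroupOf V)
  refine ⟨F.map V.subtype, map_subtype_le F, ?_, ?_⟩
  · have h := disjoint_map V.subtype_injective hF.disjoint
    rw [subgroupOf_map_subtype] at h
    exact disjoint_iff_inf_le.2 <| (le_inf inf_le_left
      (le_inf inf_le_right (inf_le_left.trans (map_subtype_le F)))).trans h.le_bot
  · have h := congrArg (map V.subtype) hF.sup_eq_top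
    rw [Subgroup.map_sup, subgroupOf_map_subtype, ← MonoidHom.range_eq_map, range_subtype] at h
    calc V = _ := h.symm
      _ ≤ _ := sup_le_sup_left inf_le_left _

variable (G) in
theorem exists_isDirectProdDecomp_isElemAb2_not_hasC2DirectFactor :
    ∃ E H : Subgroup G, IsDirectProdDecomp E H ∧ IsElemAb2 E ∧ ¬ HasC2DirectFactor H := by
  obtain ⟨E, hEV, hES, hVES⟩ := exists_complement_of_sqSubgroup_in_centerTwoTorsion G
  obtain ⟨H, d⟩ :=
    exists_isDirectProdDecomp_of_le_center (hEV.trans centerTwoTorsion_le_center) hES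
  have he := isElemAb2_of_le_centerTwoTorsion hEV
  refine ⟨E, H, d, he, (d.not_hasC2DirectFactor_iff he).2 fun z hz ↦ ?_⟩
  obtain ⟨hzV, hzH⟩ := mem_inf.1 hz
  obtain ⟨e, heE, s, hs, rfl⟩ := mem_sup_of_normal_right.1 (hVES hzV)
  have heH : e ∈ H := by
    simpa using mul_mem hzH (inv_mem (d.sqSubgroup_le_right he hs))
  rwa [disjoint_def.1 d.2.2.1 heE heH, one_mul]

end

/-- **Lemma 2.3**: every group is the direct product of an elementary abelian 2-group `E`
and a group `H` with no direct factor of order 2, and any two such decompositions have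
isomorphic corresponding factors. -/
theorem exists_unique_C2free_decomp (G : Type*) [Group G] :
    ∃ E H : Subgroup G, IsDirectProdDecomp E H ∧ IsElemAb2 E ∧ ¬ HasC2DirectFactor H ∧
      ∀ E₁ H₁ : Subgroup G, IsDirectProdDecomp E₁ H₁ → IsElemAb2 E₁ →
        ¬ HasC2DirectFactor H₁ → Nonempty (E₁ ≃* E) ∧ Nonempty (H₁ ≃* H) := by
  obtain ⟨E, H, d, he, hno⟩ := exists_isDirectProdDecomp_isElemAb2_not_hasC2DirectFactor G
  refine ⟨E, H, d, he, hno, fun E₁ H₁ d₁ he₁ hno₁ ↦ ⟨?_, ?_⟩⟩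
  · exact (d₁.exchange he₁ hno₁ d he hno).nonempty_mulEquiv_left d
  · exact (d.exchange he hno d₁ he₁ hno₁).symm.nonempty_mulEquiv_left d.symm
end

section
/- An involution in a good group normalizes every cyclic subgroup of order greater than 2, and centralizes every subgroup isomorphic to the semidirect product C₄ ⋊ C₄ (the nonabelian semidirect product of two cyclic groups of order 4 in which the acting generator inverts the normal generator). -/
/-- A group is *dihedral* if it is isomorphic to some `DihedralGroup n` with `n ≠ 0`. -/
def IsDihedralGroup (Q : Type*) [Group Q] : Prop :=
  ∃ n : ℕ, n ≠ 0 ∧ Nonempty (Q ≃* DihedralGroup n)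

/-- A 2-group `G` is *good* if for all `g h : G` the subgroup `⟨g²⟩` is normal in `G`
and the quotient `⟨g,h⟩/⟨g²⟩` is abelian or dihedral. -/
def IsGood (G : Type*) [Group G] : Prop :=
  IsPGroup 2 G ∧
  ∀ g h : G, ∃ hn : (Subgroup.zpowers (g ^ 2)).Normal,
    haveI := hn.subgroupOf (Subgroup.closure {g, h})
    (∀ x y : ↥(Subgroup.closure {g, h}) ⧸
        (Subgroup.zpowers (g ^ 2)).subgroupOf (Subgroup.closure {g, h}), x * y = y * x) ∨
    IsDihedralGroup (↥(Subgroup.closure {g, h}) ⧸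
        (Subgroup.zpowers (g ^ 2)).subgroupOf (Subgroup.closure {g, h}))

/-- Relations of `C₄ ⋊ C₄ = ⟨x,y ∣ x⁴ = y⁴ = 1, y⁻¹xy = x⁻¹⟩`. -/
def C4rC4rels : Set (FreeGroup (Fin 2)) :=
  { FreeGroup.of 0 ^ 4, FreeGroup.of 1 ^ 4,
    (FreeGroup.of 1)⁻¹ * FreeGroup.of 0 * FreeGroup.of 1 * FreeGroup.of 0 }

/-!
If `t² = 1` in a good group, then `⟨t²⟩` is trivial, so `⟨t, h⟩` is abelian or dihedral and `t`
conjugates any `h` of order `> 2` to `h` or `h⁻¹`. In `C₄ ⋊ C₄ = ⟨x, y⟩` the elements `x`, `y`, `xy`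
have order 4. An involution `t` inverting `x` would send `xy` to `x⁻¹y^{±1} = (xy)^{±1}`, forcing
`x² ∈ {1, y²}`; so every involution centralizes `x`. If `t` inverted `y`, then `ty` would be an
involution inverting `x`. Hence `t` centralizes both generators.
-/

open Subgroup

def ConjFixesOrInverts (Q : Type*) [Group Q] : Prop :=
  ∀ c a : Q, 2 < orderOf a → c * a * c⁻¹ = a ∨ c * a * c⁻¹ = a⁻¹

theorem conjFixesOrInverts_of_comm {Q : Type*} [Group Q] (hQ : ∀ a b : Q, a * b = b * a) :
    ConjFixesOrInverts Q :=
  fun c a _ ↦ .inl (by rw [hQ c a, mul_inv_cancel_right])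

theorem DihedralGroup.conjFixesOrInverts (n : ℕ) : ConjFixesOrInverts (DihedralGroup n) := by
  rintro c (i | i) ha
  · rcases c with j | j
    · left
      simp only [r_mul_r, inv_r]
      congr 1
      ring
    · right
      simp only [sr_mul_r, inv_sr, sr_mul_sr, inv_r]
      congr 1
      ring
  · rw [orderOf_sr] at ha
    omega

theorem ConjFixesOrInverts.of_injective {K Q : Type*} [Group K] [Group Q] {f : K →* Q}
    (hf : Function.Injective f) (hQ : ConjFixesOrInverts Q) : ConjFixesOrInverts K := by
  intro c a ha
  rw [← orderOf_injective f hf] at ha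
  refine (hQ (f c) (f a) ha).imp (fun h ↦ hf ?_) (fun h ↦ hf ?_) <;> simpa using h

theorem IsDihedralGroup.conjFixesOrInverts {Q : Type*} [Group Q] (hQ : IsDihedralGroup Q) :
    ConjFixesOrInverts Q := by
  obtain ⟨n, -, ⟨e⟩⟩ := hQ
  exact .of_injective (f := e.toMonoidHom) e.injective (DihedralGroup.conjFixesOrInverts n)

theorem IsGood.conj_eq_or_eq_inv {G : Type*} [Group G] (hG : IsGood G) ⦃t h : G⦄
    (ht : t ^ 2 = 1) (hh : 2 < orderOf h) : t * h * t⁻¹ = h ∨ t * h * t⁻¹ = h⁻¹ := by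
  set K := closure ({t, h} : Set G)
  obtain ⟨hn, hQ⟩ := hG.2 t h
  have := hn.subgroupOf K
  have hπ : Function.Injective (QuotientGroup.mk' ((zpowers (t ^ 2)).subgroupOf K)) := by
    rw [← MonoidHom.ker_eq_bot_iff, QuotientGroup.ker_mk', ht, zpowers_one_eq_bot,
      bot_subgroupOf]
  have hK : ConjFixesOrInverts K :=
    .of_injective hπ (hQ.elim conjFixesOrInverts_of_comm IsDihedralGroup.conjFixesOrInverts)
  have hconj := hK ⟨t, subset_closure (by simp)⟩ ⟨h, subset_closure (by simp)⟩
    (by rwa [orderOf_mk])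
  exact hconj.imp (congrArg Subtype.val) (congrArg Subtype.val)

theorem mem_normalizer_zpowers_of_conj {G : Type*} [Group G] {g h : G}
    (hgh : g * h * g⁻¹ = h ∨ g * h * g⁻¹ = h⁻¹) : g ∈ normalizer (zpowers h : Set G) := by
  rw [mem_normalizer_iff_map_conj_eq, MonoidHom.map_zpowers]
  show zpowers (g * h * g⁻¹) = zpowers h
  rcases hgh with hgh | hgh <;> rw [hgh]
  exact zpowers_inv

theorem two_lt_orderOf_of_pow_four_eq_one {G : Type*} [Group G] {a : G} (h4 : a ^ 4 = 1)
    (h2 : a ^ 2 ≠ 1) : 2 < orderOf a := by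
  rw [orderOf_eq_prime_pow (p := 2) (n := 1) h2 h4]
  norm_num

theorem sq_mul_eq_one_of_conj_eq_inv {G : Type*} [Group G] {t a : G} (ht : t ^ 2 = 1)
    (h : t * a * t⁻¹ = a⁻¹) : (t * a) ^ 2 = 1 := by
  have ht' : t⁻¹ = t := inv_eq_of_mul_eq_one_right (sq t ▸ ht)
  calc (t * a) ^ 2 = t * a * t⁻¹ * a := by rw [ht', sq]; simp only [mul_assoc]
    _ = 1 := by rw [h, inv_mul_cancel]

structure IsC4rC4Pair {G : Type*} [Group G] (x y : G) : Prop where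
  left_pow_four : x ^ 4 = 1
  right_pow_four : y ^ 4 = 1
  inv_mul_mul : y⁻¹ * x * y = x⁻¹
  left_sq_ne_one : x ^ 2 ≠ 1
  right_sq_ne_one : y ^ 2 ≠ 1
  left_sq_ne_right_sq : x ^ 2 ≠ y ^ 2

theorem isC4rC4Pair_of :
    IsC4rC4Pair (PresentedGroup.of 0 : PresentedGroup C4rC4rels) (PresentedGroup.of 1) := by
  -- the non-relations are checked in the image of `C₄ ⋊ C₄` in `D₄ × D₄`
  let gens : Fin 2 → DihedralGroup 4 × DihedralGroup 4 := ![(.r 1, 1), (.sr 0, .r 1)]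
  have hrels : ∀ r ∈ C4rC4rels, FreeGroup.lift gens r = 1 := by
    simp only [C4rC4rels, Set.mem_insert_iff, Set.mem_singleton_iff, forall_eq_or_imp,
      forall_eq, map_pow, map_mul, map_inv, FreeGroup.lift_apply_of]
    decide
  have hπ (i : Fin 2) : PresentedGroup.toGroup hrels (.of i) = gens i :=
    PresentedGroup.toGroup.of hrels
  have hmk {r : FreeGroup (Fin 2)} (hr : r ∈ C4rC4rels) : PresentedGroup.mk C4rC4rels r = 1 :=
    PresentedGroup.one_of_mem hr
  refine ⟨?_, ?_, mul_eq_one_iff_eq_inv.mp ?_, ?_, ?_, ?_⟩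
  · exact (map_pow _ _ _).symm.trans (hmk (by simp [C4rC4rels]))
  · exact (map_pow _ _ _).symm.trans (hmk (by simp [C4rC4rels]))
  · have := hmk (r := (FreeGroup.of 1)⁻¹ * FreeGroup.of 0 * FreeGroup.of 1 * FreeGroup.of 0)
      (by simp [C4rC4rels])
    rwa [map_mul, map_mul, map_mul, map_inv] at this
  all_goals
    intro h
    have := congrArg (PresentedGroup.toGroup hrels) h
    simp only [map_pow, map_one, hπ] at this
    revert this
    decide

namespace IsC4rC4Pair

variable {G : Type*} [Group G] {x y : G}

theorem map {H : Type*} [Group H] (hxy : IsC4rC4Pair x y) {f : G →* H}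
    (hf : Function.Injective f) : IsC4rC4Pair (f x) (f y) where
  left_pow_four := by rw [← map_pow, hxy.left_pow_four, map_one]
  right_pow_four := by rw [← map_pow, hxy.right_pow_four, map_one]
  inv_mul_mul := by rw [← map_inv, ← map_mul, ← map_mul, hxy.inv_mul_mul, map_inv]
  left_sq_ne_one := by rw [← map_pow, ← map_one f]; exact hf.ne hxy.left_sq_ne_one
  right_sq_ne_one := by rw [← map_pow, ← map_one f]; exact hf.ne hxy.right_sq_ne_one
  left_sq_ne_right_sq := by rw [← map_pow, ← map_pow]; exact hf.ne hxy.left_sq_ne_right_sq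

variable (hxy : IsC4rC4Pair x y)
include hxy

theorem inv_mul_inv_mul : y⁻¹ * x⁻¹ * y = x :=
  calc y⁻¹ * x⁻¹ * y = (y⁻¹ * x * y)⁻¹ := by group
    _ = x := by rw [hxy.inv_mul_mul, inv_inv]

theorem right_mul_left : y * x = x⁻¹ * y :=
  calc y * x = y * (y⁻¹ * x⁻¹ * y) := by rw [hxy.inv_mul_inv_mul]
    _ = x⁻¹ * y := by group

theorem mul_mul_inv : y * x * y⁻¹ = x⁻¹ :=
  mul_inv_eq_iff_eq_mul.mpr hxy.right_mul_left

theorem mul_inv_eq : (x * y)⁻¹ = x * y⁻¹ :=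
  calc (x * y)⁻¹ = y⁻¹ * (y * x * y⁻¹) := by rw [hxy.mul_mul_inv, mul_inv_rev]
    _ = x * y⁻¹ := by group

theorem mul_sq : (x * y) ^ 2 = y ^ 2 :=
  calc (x * y) ^ 2 = x * (y * x) * y := by simp only [sq, mul_assoc]
    _ = y ^ 2 := by rw [hxy.right_mul_left, sq]; group

theorem inv_ne_left : x⁻¹ ≠ x := fun h ↦
  hxy.left_sq_ne_one (by rw [sq]; nth_rw 1 [← h]; exact inv_mul_cancel x)

theorem two_lt_orderOf_left : 2 < orderOf x :=
  two_lt_orderOf_of_pow_four_eq_one hxy.left_pow_four hxy.left_sq_ne_one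

theorem two_lt_orderOf_right : 2 < orderOf y :=
  two_lt_orderOf_of_pow_four_eq_one hxy.right_pow_four hxy.right_sq_ne_one

theorem two_lt_orderOf_mul : 2 < orderOf (x * y) := by
  refine two_lt_orderOf_of_pow_four_eq_one ?_ (hxy.mul_sq ▸ hxy.right_sq_ne_one)
  rw [show 4 = 2 * 2 from rfl, pow_mul, hxy.mul_sq, ← pow_mul]
  exact hxy.right_pow_four

variable (hG : ∀ ⦃t a : G⦄, t ^ 2 = 1 → 2 < orderOf a → t * a * t⁻¹ = a ∨ t * a * t⁻¹ = a⁻¹)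
include hG

theorem conj_left_eq {t : G} (ht : t ^ 2 = 1) : t * x * t⁻¹ = x := by
  refine (hG ht hxy.two_lt_orderOf_left).resolve_right fun hx ↦ ?_
  have hconj_mul : t * (x * y) * t⁻¹ = x⁻¹ * (t * y * t⁻¹) := by rw [← hx]; group
  rcases hG ht hxy.two_lt_orderOf_right with hy | hy <;>
    rcases hG ht hxy.two_lt_orderOf_mul with h | h <;>
    rw [hconj_mul, hy] at h
  · exact hxy.inv_ne_left (mul_right_cancel h)
  · refine hxy.left_sq_ne_right_sq ?_
    calc x ^ 2 = x * (x * y⁻¹) * y := by rw [sq]; group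
      _ = y ^ 2 := by rw [← hxy.mul_inv_eq, ← h, sq]; group
  · refine hxy.left_sq_ne_right_sq ?_
    calc x ^ 2 = x * (x * y) * y * y ^ 2 * (y ^ 4)⁻¹ := by rw [sq, sq]; group
      _ = y ^ 2 := by rw [← h, hxy.right_pow_four]; group
  · rw [hxy.mul_inv_eq] at h
    exact hxy.inv_ne_left (mul_right_cancel h)

theorem conj_right_eq {t : G} (ht : t ^ 2 = 1) : t * y * t⁻¹ = y := by
  refine (hG ht hxy.two_lt_orderOf_right).resolve_right fun hy ↦ hxy.inv_ne_left ?_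
  calc x⁻¹ = (t * x * t⁻¹)⁻¹ := by rw [hxy.conj_left_eq hG ht]
    _ = t * (y * x * y⁻¹) * t⁻¹ := by rw [hxy.mul_mul_inv]; group
    _ = t * y * x * (t * y)⁻¹ := by group
    _ = x := hxy.conj_left_eq hG (sq_mul_eq_one_of_conj_eq_inv ht hy)

end IsC4rC4Pair

/-- **Lemma 4.3**: an involution in a good group normalizes every cyclic subgroup of
order greater than 2 and centralizes every subgroup isomorphic to `C₄ ⋊ C₄`. -/
theorem involution_normalizes_and_centralizes (G : Type*) [Group G] (hgood : IsGood G)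
    (g : G) (hg : orderOf g = 2) :
    (∀ h : G, 2 < orderOf h → g ∈ Subgroup.normalizer (Subgroup.zpowers h : Set G)) ∧
    (∀ S : Subgroup G, Nonempty (S ≃* PresentedGroup C4rC4rels) →
      ∀ s ∈ S, g * s = s * g) := by
  have hg2 : g ^ 2 = 1 := hg ▸ pow_orderOf_eq_one g
  refine ⟨fun h hh ↦ mem_normalizer_zpowers_of_conj (hgood.conj_eq_or_eq_inv hg2 hh), ?_⟩
  rintro S ⟨φ⟩ s hs
  let f : PresentedGroup C4rC4rels →* G := S.subtype.comp φ.symm.toMonoidHom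
  have hpair := isC4rC4Pair_of.map (f := f) (S.subtype_injective.comp φ.symm.injective)
  have hconj : (MulAut.conj g).toMonoidHom.comp f = f := PresentedGroup.ext fun i ↦ by
    fin_cases i
    · exact hpair.conj_left_eq hgood.conj_eq_or_eq_inv hg2
    · exact hpair.conj_right_eq hgood.conj_eq_or_eq_inv hg2
  have hs' := DFunLike.congr_fun hconj (φ ⟨s, hs⟩)
  simp only [f, MulEquiv.toMonoidHom_eq_coe, MonoidHom.coe_comp, MonoidHom.coe_coe, coe_subtype,
    Function.comp_apply, MulEquiv.symm_apply_apply, MulAut.conj_apply] at hs'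
  exact mul_inv_eq_iff_eq_mul.mp hs'
end

section
/- If the group ⟨x,y⟩ generated by elements x and y is good, the cyclic subgroup ⟨x⟩ is normal in ⟨x,y⟩, but ⟨y⟩ is not normal in ⟨x,y⟩, then the order of x is at least 4, the order of y is at most 4, and y⁻¹xy = x⁻¹. -/
open Subgroup

namespace IsPGroup

variable {G : Type*} [Group G]

theorem mem_of_zpow_mem_of_odd (hG : IsPGroup 2 G) {H : Subgroup G} {g : G} {m : ℤ}
    (hm : Odd m) (h : g ^ m ∈ H) : g ∈ H := by
  obtain ⟨n, hn⟩ := hG g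
  obtain ⟨u, v, huv⟩ := (Int.isCoprime_two_right.mpr hm).pow_right (n := n)
  have hg : g = (g ^ m) ^ u * (g ^ (2 ^ n : ℤ)) ^ v := by
    rw [← zpow_mul, ← zpow_mul, ← zpow_add, mul_comm m, mul_comm _ v, huv, zpow_one]
  rw [hg, show g ^ (2 ^ n : ℤ) = 1 by exact_mod_cast hn, one_zpow, mul_one]
  exact zpow_mem h u

theorem eq_one_of_zpow_eq_one_of_odd (hG : IsPGroup 2 G) {g : G} {m : ℤ} (hm : Odd m)
    (h : g ^ m = 1) : g = 1 :=
  mem_bot.mp (hG.mem_of_zpow_mem_of_odd hm (h ▸ one_mem ⊥))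

theorem eq_one_of_mem_zpowers_sq (hG : IsPGroup 2 G) {g : G} (h : g ∈ zpowers (g ^ 2)) :
    g = 1 := by
  obtain ⟨m, hm⟩ := mem_zpowers_iff.mp h
  have h1 : g ^ (2 * m - 1) = 1 := by
    rw [zpow_sub_one, zpow_mul, zpow_ofNat, hm, mul_inv_cancel]
  exact hG.eq_one_of_zpow_eq_one_of_odd ((even_two_mul m).sub_odd odd_one) h1

theorem four_dvd_of_zpow_mem (hG : IsPGroup 2 G) {H : Subgroup G} {g : G} {m : ℤ}
    (h : g ^ m ∈ H) (hg : g ^ 2 ∉ H) : 4 ∣ m := by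
  rcases Int.even_or_odd m with ⟨j, rfl⟩ | hm
  · rcases Int.even_or_odd j with ⟨i, rfl⟩ | hj
    · exact ⟨i, by ring⟩
    · rw [← two_mul, zpow_mul, zpow_ofNat] at h
      exact absurd (hG.mem_of_zpow_mem_of_odd hj h) hg
  · exact absurd (pow_mem (hG.mem_of_zpow_mem_of_odd hm h) 2) hg

theorem exists_pow_two_pow_ne_one (hG : IsPGroup 2 G) {g : G} (hg : g ≠ 1) :
    ∃ n : ℕ, g ^ 2 ^ n ≠ 1 ∧ (g ^ 2 ^ n) ^ 2 = 1 := by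
  obtain ⟨n, hn⟩ := IsPGroup.iff_orderOf.mp hG g
  obtain _ | n := n
  · exact absurd (orderOf_eq_one_iff.mp hn) hg
  refine ⟨n, pow_ne_one_of_lt_orderOf (by positivity) ?_, ?_⟩
  · rw [hn]
    exact Nat.pow_lt_pow_right (by norm_num) n.lt_succ_self
  · rw [← pow_mul, ← pow_succ, ← hn, pow_orderOf_eq_one]

theorem four_le_orderOf (hG : IsPGroup 2 G) {g : G} (hg : g ^ 2 ≠ 1) : 4 ≤ orderOf g := by
  obtain ⟨n, hn⟩ := IsPGroup.iff_orderOf.mp hG g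
  rw [hn]
  by_contra! h
  have hn1 : n ≤ 1 := Nat.lt_succ_iff.mp ((Nat.pow_lt_pow_iff_right (by norm_num)).mp
    (h.trans_eq (by norm_num : 4 = 2 ^ 2)))
  exact hg (orderOf_dvd_iff_pow_eq_one.mp (hn ▸ Nat.pow_dvd_pow 2 hn1))

end IsPGroup

section Involution

variable {G : Type*} [Group G] {g : G} {m : ℤ}

theorem zpow_eq_one_of_sq_eq_one (hg : g ^ 2 = 1) (hm : Even m) : g ^ m = 1 := by
  obtain ⟨j, rfl⟩ := hm
  rw [← two_mul, zpow_mul, zpow_ofNat, hg, one_zpow]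

theorem zpow_eq_self_of_sq_eq_one (hg : g ^ 2 = 1) (hm : Odd m) : g ^ m = g := by
  obtain ⟨j, rfl⟩ := hm
  rw [zpow_add_one, zpow_mul, zpow_ofNat, hg, one_zpow, one_mul]

end Involution

section Conjugation

variable {G : Type*} [Group G] {x y : G} {k : ℤ}

theorem conj_zpow_of_conj_eq_zpow (hk : y⁻¹ * x * y = x ^ k) (m : ℤ) :
    y⁻¹ * x ^ m * y = x ^ (k * m) := by
  rw [zpow_mul, ← hk]
  simpa using (conj_zpow (a := y⁻¹) (b := x) (i := m)).symm

theorem zpow_mul_self_eq_of_zpow_succ_mem (hk : y⁻¹ * x * y = x ^ k)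
    (hc : x ^ (k + 1) ∈ zpowers y) : x ^ (k * k) = x := by
  obtain ⟨s, hs⟩ := mem_zpowers_iff.mp hc
  have h := conj_zpow_of_conj_eq_zpow hk (k + 1)
  rw [← hs, show y⁻¹ * y ^ s * y = y ^ s by group, hs] at h
  calc x ^ (k * k) = x ^ (k * (k + 1)) * x ^ (-k) := by rw [← zpow_add]; ring_nf
    _ = x := by rw [← h, ← zpow_add, add_neg_cancel_comm, zpow_one]

theorem commute_sq_of_conj_eq_zpow (hk : y⁻¹ * x * y = x ^ k) (hkk : x ^ (k * k) = x) :
    Commute (y ^ 2) x := by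
  have h : (y ^ 2)⁻¹ * x * y ^ 2 = x := by
    rw [sq, mul_inv_rev, show y⁻¹ * y⁻¹ * x * (y * y) = y⁻¹ * (y⁻¹ * x * y) * y by group, hk,
      conj_zpow_of_conj_eq_zpow hk, hkk]
  rw [mul_assoc, inv_mul_eq_iff_eq_mul] at h
  exact h.symm

theorem conj_zpow_odd_eq (hk : y⁻¹ * x * y = x ^ k) (hy2x : Commute (y ^ 2) x) {s : ℤ}
    (hs : Odd s) : (y ^ s)⁻¹ * x * y ^ s = x ^ k := by
  obtain ⟨r, rfl⟩ := hs
  rw [zpow_add_one, zpow_mul, zpow_ofNat, mul_inv_rev,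
    show y⁻¹ * ((y ^ 2) ^ r)⁻¹ * x * ((y ^ 2) ^ r * y)
      = y⁻¹ * (((y ^ 2) ^ r)⁻¹ * x * (y ^ 2) ^ r) * y by group,
    mul_assoc _ x, ← (hy2x.zpow_left r).eq, inv_mul_cancel_left, hk]

theorem zpowers_normal_of_zpow_sub_one_mem (hgen : closure {x, y} = ⊤)
    (hk : y⁻¹ * x * y = x ^ k) (h : x ^ (k - 1) ∈ zpowers y) : (zpowers y).Normal := by
  have h₁ : x * y * x⁻¹ ∈ zpowers y := by
    rw [show x * y * x⁻¹ = y * x ^ (k - 1) by rw [zpow_sub_one, ← hk]; group]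
    exact mul_mem (mem_zpowers y) h
  have h₂ : y ∈ zpowers (x * y * x⁻¹) := by
    have h' : x⁻¹ * y * x ∈ zpowers y := by
      rw [show x⁻¹ * y * x = y * (x ^ (k - 1))⁻¹ by
        rw [← zpow_neg, neg_sub, sub_eq_neg_add, zpow_add, zpow_neg, zpow_one, ← hk]; group]
      exact mul_mem (mem_zpowers y) (inv_mem h)
    obtain ⟨m, hm⟩ := mem_zpowers_iff.mp h'
    exact mem_zpowers_iff.mpr ⟨m, by rw [conj_zpow, hm]; group⟩
  rw [← normalizer_eq_top_iff, eq_top_iff, ← hgen, closure_le]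
  rintro z (rfl | rfl)
  · rw [SetLike.mem_coe, mem_normalizer_iff_map_conj_eq, MonoidHom.map_zpowers]
    exact le_antisymm (zpowers_le.mpr h₁) (zpowers_le.mpr h₂)
  · exact le_normalizer (mem_zpowers z)

theorem mem_closure_mul_pair {u w : G} (hw : w ∈ zpowers y) : u ∈ closure {u * w, y} := by
  have hw' : w ∈ closure {u * w, y} := zpowers_le.mpr (subset_closure (by simp)) hw
  simpa using mul_mem (subset_closure (by simp) : u * w ∈ closure {u * w, y}) (inv_mem hw')

end Conjugation

theorem DihedralGroup.conj_eq_or_eq_inv_of_sq_ne_one {n : ℕ} {a : DihedralGroup n}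
    (b : DihedralGroup n) (ha : a ^ 2 ≠ 1) :
    b⁻¹ * a * b = a ∨ (b⁻¹ * a * b = a⁻¹ ∧ b ^ 2 = 1) := by
  rcases a with i | i
  · rcases b with j | j
    · left
      simp only [DihedralGroup.inv_r, DihedralGroup.r_mul_r]
      congr 1
      ring
    · refine .inr ⟨?_, by rw [sq, DihedralGroup.sr_mul_self]⟩
      simp only [DihedralGroup.inv_sr, DihedralGroup.inv_r, DihedralGroup.sr_mul_r,
        DihedralGroup.sr_mul_sr]
      congr 1
      ring
  · exact absurd (by rw [sq, DihedralGroup.sr_mul_self]) ha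

theorem conj_eq_or_eq_inv_of_sq_ne_one {Q : Type*} [Group Q]
    (hQ : (∀ a b : Q, a * b = b * a) ∨ IsDihedralGroup Q) {a : Q} (b : Q) (ha : a ^ 2 ≠ 1) :
    b⁻¹ * a * b = a ∨ (b⁻¹ * a * b = a⁻¹ ∧ b ^ 2 = 1) := by
  rcases hQ with hQ | ⟨n, -, ⟨e⟩⟩
  · left
    rw [mul_assoc, hQ a b, inv_mul_cancel_left]
  · have ha' : e a ^ 2 ≠ 1 := by rwa [← map_pow, Ne, MulEquiv.map_eq_one_iff]
    simpa only [← e.injective.eq_iff, ← map_inv e, ← map_mul, ← map_pow, map_one] using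
      DihedralGroup.conj_eq_or_eq_inv_of_sq_ne_one (e b) ha'

namespace IsGood

variable {G : Type*} [Group G] {x y : G} {k : ℤ}

theorem zpowers_sq_normal (hG : IsGood G) (g : G) : (zpowers (g ^ 2)).Normal :=
  (hG.2 g g).1

theorem conj_mem_or (hG : IsGood G) {g h a b : G} (ha : a ∈ closure {g, h})
    (hb : b ∈ closure {g, h}) (ha2 : a ^ 2 ∉ zpowers (g ^ 2)) :
    b⁻¹ * a * b * a⁻¹ ∈ zpowers (g ^ 2) ∨
      (b⁻¹ * a * b * a ∈ zpowers (g ^ 2) ∧ b ^ 2 ∈ zpowers (g ^ 2)) := by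
  obtain ⟨hn, hQ⟩ := hG.2 g h
  have := hn.subgroupOf (closure {g, h})
  set π := QuotientGroup.mk' ((zpowers (g ^ 2)).subgroupOf (closure {g, h}))
  have hπ (t : closure {g, h}) : π t = 1 ↔ (t : G) ∈ zpowers (g ^ 2) := by
    rw [QuotientGroup.mk'_apply, QuotientGroup.eq_one_iff, mem_subgroupOf]
  set a' : closure {g, h} := ⟨a, ha⟩
  set b' : closure {g, h} := ⟨b, hb⟩
  have ha2' : π a' ^ 2 ≠ 1 := by rwa [← map_pow, Ne, hπ]
  rcases conj_eq_or_eq_inv_of_sq_ne_one hQ (π b') ha2' with h1 | ⟨h1, h2⟩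
  · left
    refine (hπ (b'⁻¹ * a' * b' * a'⁻¹)).1 ?_
    rw [map_mul, map_inv, map_mul, map_mul, map_inv, h1, mul_inv_cancel]
  · right
    refine ⟨(hπ (b'⁻¹ * a' * b' * a')).1 ?_, (hπ (b' ^ 2)).1 ?_⟩
    · rw [map_mul, map_mul, map_mul, map_inv, h1, inv_mul_cancel]
    · rw [map_pow, h2]

theorem commute_of_sq_eq_one (hG : IsGood G) {g h a b : G} (hg : g ^ 2 = 1)
    (ha : a ∈ closure {g, h}) (hb : b ∈ closure {g, h}) (ha2 : a ^ 2 ≠ 1) (hb2 : b ^ 2 ≠ 1) :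
    Commute a b := by
  have := hG.conj_mem_or ha hb
  simp only [hg, zpowers_one_eq_bot, mem_bot] at this
  rcases this ha2 with h | ⟨-, h⟩
  · rw [mul_inv_eq_one, mul_assoc, inv_mul_eq_iff_eq_mul] at h
    exact h
  · exact absurd h hb2

theorem commute_of_mul_sq_eq_one (hG : IsGood G) {u w : G} (hw : w ∈ zpowers y)
    (h : (u * w) ^ 2 = 1) (hu : u ^ 2 ≠ 1) (hy : y ^ 2 ≠ 1) : Commute u y :=
  hG.commute_of_sq_eq_one h (mem_closure_mul_pair hw) (subset_closure (by simp)) hu hy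

theorem sq_eq_one_of_conj_eq_inv (hG : IsGood G) {u w : G} (hw : w ∈ zpowers y)
    (huw : Commute u w) (hsq : u ^ 2 = w ^ 2) (hu : y⁻¹ * u * y = u⁻¹) : u ^ 2 = 1 := by
  by_contra hu2
  have hy2 : y ^ 2 ≠ 1 := by
    intro hy2
    obtain ⟨m, rfl⟩ := mem_zpowers_iff.mp hw
    apply hu2
    rw [hsq, ← zpow_natCast, ← zpow_mul, mul_comm, zpow_mul, zpow_natCast, hy2, one_zpow]
  have hg : (u * w⁻¹) ^ 2 = 1 := by rw [huw.inv_right.mul_pow, hsq, inv_pow, mul_inv_cancel]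
  have hc := hG.commute_of_mul_sq_eq_one (inv_mem hw) hg hu2 hy2
  rw [mul_assoc, hc.eq, inv_mul_cancel_left] at hu
  apply hu2
  rw [sq]
  nth_rewrite 2 [hu]
  exact mul_inv_cancel u

theorem commute_of_conj_eq_zpow (hG : IsGood G) {w : G} (hw : w ∈ zpowers y)
    (hk : w⁻¹ * x * w = x ^ k) (hc : w ^ 2 = x ^ (k + 1)) (hx2 : x ^ 2 ≠ 1) (hy2 : y ^ 2 ≠ 1) :
    Commute x y := by
  have hg : (x * w⁻¹) ^ 2 = 1 := by
    rw [sq, show x * w⁻¹ * (x * w⁻¹) = x * (w⁻¹ * x * w) * (w ^ 2)⁻¹ by group, hk, hc]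
    group
  exact hG.commute_of_mul_sq_eq_one (inv_mem hw) hg hx2 hy2

theorem odd_of_conj_eq_zpow (hG : IsGood G) (hk : y⁻¹ * x * y = x ^ k) (hx : x ≠ 1) :
    Odd k := by
  by_contra hk_odd
  obtain ⟨j, rfl⟩ := Int.not_odd_iff_even.mp hk_odd
  have h : y⁻¹ * x * y⁻¹⁻¹ ∈ zpowers (x ^ 2) := by
    rw [inv_inv, hk, ← two_mul, zpow_mul, zpow_ofNat]
    exact zpow_mem (mem_zpowers _) j
  have h' := (hG.zpowers_sq_normal x).conj_mem _ h y
  rw [show y * (y⁻¹ * x * y⁻¹⁻¹) * y⁻¹ = x by group] at h'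
  exact hx (hG.1.eq_one_of_mem_zpowers_sq h')

theorem zpow_succ_mem_and_sq_not_mem (hG : IsGood G) (hgen : closure {x, y} = ⊤)
    (hk : y⁻¹ * x * y = x ^ k) (hy : ¬ (zpowers y).Normal) :
    x ^ (k + 1) ∈ zpowers (y ^ 2) ∧ x ^ 2 ∉ zpowers (y ^ 2) := by
  have hle : zpowers (y ^ 2) ≤ zpowers y := zpowers_le.mpr (pow_mem (mem_zpowers y) 2)
  have hsub : x ^ (k - 1) ∉ zpowers (y ^ 2) := fun h =>
    hy (zpowers_normal_of_zpow_sub_one_mem hgen hk (hle h))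
  have hx : x ≠ 1 := by
    rintro rfl
    exact hsub (by simp)
  have hx2 : x ^ 2 ∉ zpowers (y ^ 2) := by
    intro h
    obtain ⟨j, hj⟩ := (hG.odd_of_conj_eq_zpow hk hx).sub_odd odd_one
    rw [hj, ← two_mul, zpow_mul, zpow_ofNat] at hsub
    exact hsub (zpow_mem h j)
  have hgen' : closure {y, x} = ⊤ := by rw [Set.pair_comm, hgen]
  refine ⟨?_, hx2⟩
  rcases hG.conj_mem_or (hgen' ▸ mem_top x) (hgen' ▸ mem_top y) hx2 with h | ⟨h, -⟩
  · rw [hk, ← zpow_sub_one] at h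
    exact absurd h hsub
  · rwa [hk, ← zpow_add_one] at h

theorem zpow_four_mul_eq_one (hG : IsGood G) {t : ℤ} (hk : y⁻¹ * x * y = x ^ (4 * t - 1))
    (hy2x : Commute (y ^ 2) x) (hc : x ^ (4 * t) ∈ zpowers (y ^ 2)) (hc2 : x ^ (8 * t) = 1)
    (hx2 : x ^ 2 ∉ zpowers (y ^ 2)) : x ^ (4 * t) = 1 := by
  by_contra hc1
  obtain ⟨s, hs⟩ := mem_zpowers_iff.mp hc
  have hy2 : y ^ 2 ≠ 1 := fun h => hc1 (by rw [← hs, h, one_zpow])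
  rcases Int.even_or_odd s with ⟨r, rfl⟩ | hs_odd
  · have hu : y⁻¹ * x ^ (2 * t) * y = (x ^ (2 * t))⁻¹ :=
      calc y⁻¹ * x ^ (2 * t) * y = x ^ (8 * t * t) * x ^ (-(2 * t)) := by
            rw [conj_zpow_of_conj_eq_zpow hk, ← zpow_add]; ring_nf
        _ = (x ^ (2 * t))⁻¹ := by rw [zpow_mul, hc2, one_zpow, one_mul, zpow_neg]
    have hsq : (x ^ (2 * t)) ^ 2 = ((y ^ 2) ^ r) ^ 2 := by
      rw [show (x ^ (2 * t)) ^ 2 = x ^ (4 * t) by group, ← hs]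
      group
    refine hc1 (Eq.trans (by group) (hG.sq_eq_one_of_conj_eq_inv
      (zpow_mem (pow_mem (mem_zpowers y) 2) r) ((hy2x.zpow_left r).zpow_right _).symm hsq hu))
  · have hxy := hG.commute_of_conj_eq_zpow (zpow_mem (mem_zpowers y) s)
      (conj_zpow_odd_eq hk hy2x hs_odd) (by rw [sub_add_cancel, ← hs]; group)
      (fun h => hx2 (h ▸ one_mem _)) hy2
    rw [mul_assoc, hxy.eq, inv_mul_cancel_left] at hk
    apply hx2
    rwa [show x ^ 2 = x ^ (4 * t) by rw [sq]; nth_rewrite 1 [hk]; group]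

theorem conj_eq_inv (hG : IsGood G) (hgen : closure {x, y} = ⊤)
    (hk : y⁻¹ * x * y = x ^ k) (hy : ¬ (zpowers y).Normal) : y⁻¹ * x * y = x⁻¹ := by
  obtain ⟨hc, hx2⟩ := hG.zpow_succ_mem_and_sq_not_mem hgen hk hy
  have hkk := zpow_mul_self_eq_of_zpow_succ_mem hk (zpowers_le.mpr (pow_mem (mem_zpowers y) 2) hc)
  obtain ⟨t, ht⟩ := hG.1.four_dvd_of_zpow_mem hc hx2
  obtain rfl : k = 4 * t - 1 := by linarith
  have hc2 : x ^ (8 * t) = 1 := by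
    have h : (x ^ (8 * t)) ^ (2 * t - 1) = 1 := by
      rw [← zpow_mul, show 8 * t * (2 * t - 1) = (4 * t - 1) * (4 * t - 1) - 1 by ring,
        zpow_sub_one, hkk, mul_inv_cancel]
    exact hG.1.eq_one_of_zpow_eq_one_of_odd ((even_two_mul t).sub_odd odd_one) h
  rw [sub_add_cancel] at hc
  rw [hk, ← mul_eq_one_iff_eq_inv, ← zpow_add_one, sub_add_cancel]
  exact hG.zpow_four_mul_eq_one hk (commute_sq_of_conj_eq_zpow hk hkk) hc hc2 hx2

theorem sq_eq_one_of_sq_mem_zpowers (hG : IsGood G) {w : G} (hinv : y⁻¹ * x * y = x⁻¹)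
    (hx2 : x ^ 2 ≠ 1) (hw : w ∈ zpowers y) (hwx : Commute w x) (hζ : (w ^ 2) ^ 2 = 1)
    (hζx : w ^ 2 ∈ zpowers x) : w ^ 2 = 1 := by
  obtain ⟨m, hm⟩ := mem_zpowers_iff.mp hζx
  rcases Int.even_or_odd m with ⟨t, rfl⟩ | hm_odd
  · have hu : y⁻¹ * x ^ t * y = (x ^ t)⁻¹ := by
      rw [conj_zpow_of_conj_eq_zpow (k := -1) (by rwa [zpow_neg_one]), neg_one_mul, zpow_neg]
    have hsq : (x ^ t) ^ 2 = w ^ 2 := by rw [← hm]; group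
    rw [← hsq]
    exact hG.sq_eq_one_of_conj_eq_inv hw (hwx.symm.zpow_left t) hsq hu
  · have hx : x ∈ zpowers (w ^ 2) :=
      hG.1.mem_of_zpow_mem_of_odd hm_odd (by rw [hm]; exact mem_zpowers _)
    obtain ⟨i, rfl⟩ := mem_zpowers_iff.mp hx
    refine absurd ?_ hx2
    rw [← zpow_natCast, ← zpow_mul, mul_comm, zpow_mul, zpow_natCast, hζ, one_zpow]

theorem sq_mem_zpowers_of_conj_eq_inv (hG : IsGood G) {w : G} (hinv : y⁻¹ * x * y = x⁻¹)
    (hx2 : x ^ 2 ≠ 1) (hw : w ∈ zpowers (y ^ 2)) (hwx : Commute w x) (hζ : (w ^ 2) ^ 2 = 1) :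
    w ^ 2 ∈ zpowers x := by
  by_contra hζx
  have hpow (m : ℤ) : ((x * w) ^ 2) ^ m = x ^ (2 * m) * (w ^ 2) ^ m := by
    rw [hwx.symm.mul_pow, (hwx.symm.pow_pow 2 2).mul_zpow, zpow_mul, zpow_ofNat]
  have hx2N : x ^ 2 ∉ zpowers ((x * w) ^ 2) := by
    intro h
    obtain ⟨m, hm⟩ := mem_zpowers_iff.mp h
    rw [hpow] at hm
    have h1 : (w ^ 2) ^ m = (x ^ 2) ^ (1 - m) := by rw [eq_inv_mul_of_mul_eq hm]; group
    rcases Int.even_or_odd m with hm_even | hm_odd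
    · rw [zpow_eq_one_of_sq_eq_one hζ hm_even] at h1
      exact hx2 (hG.1.eq_one_of_zpow_eq_one_of_odd (odd_one.sub_even hm_even) h1.symm)
    · rw [zpow_eq_self_of_sq_eq_one hζ hm_odd] at h1
      exact hζx (h1 ▸ zpow_mem (pow_mem (mem_zpowers x) 2) _)
  have hy2N : y ^ 2 ∉ zpowers ((x * w) ^ 2) := by
    intro h
    obtain ⟨m, hm⟩ := mem_zpowers_iff.mp h
    obtain ⟨j, rfl⟩ := mem_zpowers_iff.mp hw
    rw [hpow] at hm
    have h1 : (y ^ 2) ^ (1 - 2 * (j * m)) ∈ zpowers x := by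
      rw [show (y ^ 2) ^ (1 - 2 * (j * m)) = x ^ (2 * m) by rw [eq_mul_inv_of_mul_eq hm]; group]
      exact zpow_mem (mem_zpowers x) _
    have h2 := hG.1.mem_of_zpow_mem_of_odd (odd_one.sub_even (even_two_mul _)) h1
    exact hζx (pow_mem (zpow_mem h2 j) 2)
  rcases hG.conj_mem_or (mem_closure_mul_pair (zpowers_le.mpr (pow_mem (mem_zpowers y) 2) hw))
    (subset_closure (by simp) : y ∈ closure {x * w, y}) hx2N with h | ⟨-, h⟩
  · rw [hinv] at h
    exact hx2N (by simpa [sq] using inv_mem h)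
  · exact hy2N h

theorem orderOf_le_four (hG : IsGood G) (hinv : y⁻¹ * x * y = x⁻¹) (hx2 : x ^ 2 ≠ 1) :
    orderOf y ≤ 4 := by
  refine orderOf_le_of_pow_eq_one (by norm_num) ?_
  by_contra hy4
  have hy2x : Commute (y ^ 2) x :=
    commute_sq_of_conj_eq_zpow (k := -1) (by rwa [zpow_neg_one]) (by simp)
  obtain ⟨n, hζ, hζ2⟩ := hG.1.exists_pow_two_pow_ne_one hy4
  have hw : ((y ^ 2) ^ 2 ^ n) ^ 2 = (y ^ 4) ^ 2 ^ n := by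
    rw [← pow_mul, ← pow_mul, ← pow_mul]; ring_nf
  rw [← hw] at hζ hζ2
  have hwy : (y ^ 2) ^ 2 ^ n ∈ zpowers (y ^ 2) := pow_mem (mem_zpowers _) _
  have hζx := hG.sq_mem_zpowers_of_conj_eq_inv hinv hx2 hwy (hy2x.pow_left _) hζ2
  exact hζ (hG.sq_eq_one_of_sq_mem_zpowers hinv hx2
    (zpowers_le.mpr (pow_mem (mem_zpowers y) 2) hwy) (hy2x.pow_left _) hζ2 hζx)

end IsGood

/-- **Lemma 4.4**: if `⟨x,y⟩` is good, `⟨x⟩` is normal in it but `⟨y⟩` is not, then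
`|x| ≥ 4 ≥ |y|` and `xʸ = x⁻¹`. -/
theorem good_normal_cyclic_inverted (G : Type*) [Group G] (hgood : IsGood G)
    (x y : G) (hgen : Subgroup.closure {x, y} = ⊤)
    (hx : (Subgroup.zpowers x).Normal) (hy : ¬ (Subgroup.zpowers y).Normal) :
    4 ≤ orderOf x ∧ orderOf y ≤ 4 ∧ y⁻¹ * x * y = x⁻¹ := by
  obtain ⟨k, hk⟩ : ∃ k : ℤ, x ^ k = y⁻¹ * x * y :=
    mem_zpowers_iff.mp (by simpa using hx.conj_mem x (mem_zpowers x) y⁻¹)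
  replace hk := hk.symm
  have hx2 : x ^ 2 ≠ 1 := fun h =>
    (hgood.zpow_succ_mem_and_sq_not_mem hgen hk hy).2 (h ▸ one_mem _)
  have hinv := hgood.conj_eq_inv hgen hk hy
  exact ⟨hgood.1.four_le_orderOf hx2, hgood.orderOf_le_four hinv hx2, hinv⟩
end

section
/- If H is a good group of exponent 4, then its Frattini subgroup Φ(H) is elementary abelian and contained in the centre of H. -/
open scoped Pointwise

section Aux

variable {H : Type*} [Group H]

/-- If every element's 4th power is 1 and each `⟨g²⟩` is normal, then every square is central. -/
lemma sq_mem_center (hpow : ∀ g : H, g ^ 4 = 1)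
    (hnorm : ∀ g : H, (Subgroup.zpowers (g ^ 2)).Normal) (g : H) :
    g ^ 2 ∈ Subgroup.center H := by
  have hsq : (g ^ 2) ^ 2 = 1 := by rw [← pow_mul]; exact hpow g
  rw [Subgroup.mem_center_iff]
  intro h
  have hmem : h * g ^ 2 * h⁻¹ ∈ Subgroup.zpowers (g ^ 2) :=
    (hnorm g).conj_mem _ (Subgroup.mem_zpowers _) h
  obtain ⟨n, hn⟩ := hmem
  dsimp only at hn
  rcases Int.even_or_odd n with ⟨k, hk⟩ | ⟨k, hk⟩
  · have h1 : h * g ^ 2 * h⁻¹ = 1 := by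
      rw [← hn, hk]
      calc (g ^ 2) ^ (k + k) = ((g ^ 2) ^ (2:ℤ)) ^ k := by rw [← zpow_mul, two_mul]
        _ = 1 := by rw [zpow_two, ← pow_two, hsq, one_zpow]
    have h2 : g ^ 2 = 1 := by
      have := congrArg (fun x => h⁻¹ * x * h) h1
      simpa [mul_assoc] using this
    rw [h2]; simp
  · have h1 : h * g ^ 2 * h⁻¹ = g ^ 2 := by
      rw [← hn, hk]
      calc (g ^ 2) ^ (2 * k + 1) = ((g ^ 2) ^ (2:ℤ)) ^ k * g ^ 2 := by
            rw [zpow_add, zpow_one, ← zpow_mul]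
        _ = g ^ 2 := by rw [zpow_two, ← pow_two, hsq, one_zpow, one_mul]
    have := congrArg (fun x => x * h) h1
    simpa [mul_assoc] using this

end Aux

/-- **Lemma 4.8**: the Frattini subgroup of a good group of exponent 4 is elementary
abelian and central. -/
theorem good_exponent_four_frattini (H : Type*) [Group H] (hgood : IsGood H)
    (hexp : Monoid.exponent H = 4) :
    (∀ x ∈ frattini H, x ^ 2 = 1) ∧ frattini H ≤ Subgroup.center H := by
  have hpow : ∀ g : H, g ^ 4 = 1 := by
    intro g; rw [← hexp]; exact Monoid.pow_exponent_eq_one g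
  have hnorm : ∀ g : H, (Subgroup.zpowers (g ^ 2)).Normal := fun g => (hgood.2 g g).choose
  have hcen : ∀ g : H, g ^ 2 ∈ Subgroup.center H := sq_mem_center hpow hnorm
  have hord : ∀ g : H, (g ^ 2) ^ 2 = 1 := fun g => by rw [← pow_mul]; exact hpow g
  -- the subgroup of central elements of order dividing 2
  set K : Subgroup H :=
    { carrier := {x | x ∈ Subgroup.center H ∧ x ^ 2 = 1}
      one_mem' := ⟨Subgroup.one_mem _, one_pow 2⟩
      mul_mem' := by
        rintro a b ⟨ha, ha2⟩ ⟨hb, hb2⟩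
        refine ⟨Subgroup.mul_mem _ ha hb, ?_⟩
        have hab : a * b = b * a := Subgroup.mem_center_iff.mp hb a
        calc (a * b) ^ 2 = a ^ 2 * b ^ 2 := by
              rw [pow_two, pow_two, pow_two, mul_assoc, mul_assoc, ← mul_assoc b a b, ← hab,
                mul_assoc]
          _ = 1 := by rw [ha2, hb2, one_mul]
      inv_mem' := by
        rintro a ⟨ha, ha2⟩
        exact ⟨Subgroup.inv_mem _ ha, by rw [inv_pow, ha2, inv_one]⟩ } with hK
  -- the subgroup generated by squares
  set S : Subgroup H := Subgroup.closure {x | ∃ g : H, x = g ^ 2} with hS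
  have hSK : S ≤ K := by
    rw [hS]
    apply (Subgroup.closure_le K).mpr
    rintro x ⟨g, rfl⟩
    exact ⟨hcen g, hord g⟩
  have hsqS : ∀ g : H, g ^ 2 ∈ S := fun g => Subgroup.subset_closure ⟨g, rfl⟩
  -- S contains all commutators
  have hcommS : ∀ a b : H, a * b * a⁻¹ * b⁻¹ ∈ S := by
    intro a b
    have hc : b * a⁻¹ ^ 2 = a⁻¹ ^ 2 * b := Subgroup.mem_center_iff.mp (hcen a⁻¹) b
    have key : (a * b) ^ 2 * a⁻¹ ^ 2 * b⁻¹ ^ 2 = a * b * a⁻¹ * b⁻¹ := by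
      calc (a * b) ^ 2 * a⁻¹ ^ 2 * b⁻¹ ^ 2 = a * b * a * (b * a⁻¹ ^ 2) * b⁻¹ ^ 2 := by
            rw [pow_two]; group
        _ = a * b * a * (a⁻¹ ^ 2 * b) * b⁻¹ ^ 2 := by rw [hc]
        _ = a * b * a⁻¹ * b⁻¹ := by group
    rw [← key]
    exact Subgroup.mul_mem _ (Subgroup.mul_mem _ (hsqS (a * b)) (hsqS a⁻¹)) (hsqS b⁻¹)
  -- hence any subgroup containing S is normal
  have hnormal : ∀ M : Subgroup H, S ≤ M → M.Normal := by
    intro M hSM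
    constructor
    intro n hn g
    have : (g * n * g⁻¹ * n⁻¹) * n ∈ M :=
      Subgroup.mul_mem _ (hSM (hcommS g n)) hn
    simpa [mul_assoc] using this
  -- frattini H ≤ S : for x ∉ S produce a coatom avoiding x
  have hfS : frattini H ≤ S := by
    intro x hx
    by_contra hxS
    -- Zorn: maximal subgroup containing S, avoiding x
    obtain ⟨M, -, hM⟩ := zorn_le_nonempty₀ {T : Subgroup H | S ≤ T ∧ x ∉ T}
      (fun c hcs hchain y hy => by
        refine ⟨sSup c, ⟨?_, ?_⟩, fun z hz => le_sSup hz⟩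
        · exact le_trans (hcs hy).1 (le_sSup hy)
        · intro hxc
          rw [Subgroup.mem_sSup_of_directedOn ⟨y, hy⟩ hchain.directedOn] at hxc
          obtain ⟨T, hTc, hxT⟩ := hxc
          exact (hcs hTc).2 hxT) S ⟨le_refl S, hxS⟩
    obtain ⟨⟨hSM, hxM⟩, hmax⟩ := hM
    haveI : M.Normal := hnormal M hSM
    -- M is a coatom
    have hcoatom : IsCoatom M := by
      constructor
      · intro hMt; exact hxM (hMt ▸ Subgroup.mem_top x)
      · intro N hMN
        have hxN : x ∈ N := by
          by_contra hxN
          exact hMN.ne' (le_antisymm (hmax ⟨le_trans hSM hMN.le, hxN⟩ hMN.le) hMN.le)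
        -- show N = ⊤ : every y is in M ⊔ zpowers x ≤ N
        rw [eq_top_iff]
        intro y _
        by_cases hyM : y ∈ M
        · exact hMN.le hyM
        · -- x ∈ M ⊔ zpowers y by maximality
          have hxMy : x ∈ M ⊔ Subgroup.zpowers y := by
            by_contra hxMy
            exact hyM (hmax ⟨le_trans hSM le_sup_left, hxMy⟩ le_sup_left
              (Subgroup.mem_sup_right (Subgroup.mem_zpowers y)))
          have : (x : H) ∈ (M : Set H) * (Subgroup.zpowers y : Set H) := by
            rw [← Subgroup.normal_mul]; exact hxMy
          obtain ⟨m, hm, z, hz, hmz⟩ := this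
          obtain ⟨k, hk⟩ := hz
          dsimp only at hk
          -- y^k = (y^2)^j or (y^2)^j * y
          have hy2 : y ^ (2:ℤ) ∈ M := by
            rw [zpow_two, ← pow_two]; exact hSM (hsqS y)
          rcases Int.even_or_odd k with ⟨j, hj⟩ | ⟨j, hj⟩
          · exfalso
            apply hxM
            have : z ∈ M := by
              rw [← hk, hj, ← two_mul, zpow_mul]
              exact Subgroup.zpow_mem M hy2 j
            rw [← hmz]; exact Subgroup.mul_mem _ hm this
          · -- x = m * (y²)^j * y, so y = ((y²)^j)⁻¹ * m⁻¹ * x ∈ N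
            have hzy : z = (y ^ (2:ℤ)) ^ j * y := by
              rw [← hk, hj, zpow_add, zpow_one, zpow_mul]
            have hyeq : y = ((y ^ (2:ℤ)) ^ j)⁻¹ * m⁻¹ * x := by
              rw [← hmz, hzy]; group
            rw [hyeq]
            exact Subgroup.mul_mem _ (Subgroup.mul_mem _
              (Subgroup.inv_mem _ (hMN.le (Subgroup.zpow_mem M hy2 j)))
              (Subgroup.inv_mem _ (hMN.le hm))) hxN
    exact hxM (frattini_le_coatom hcoatom hx)
  have hfK : frattini H ≤ K := le_trans hfS hSK
  exact ⟨fun x hx => (hfK hx).2, fun x hx => (hfK hx).1⟩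
end

section
/- Let a, x, y be elements of a good group H of exponent 4 such that y⁻¹xy = x⁻¹, the subgroup ⟨x,y⟩ is isomorphic to C₄ ⋊ C₄, and a² ∉ ⟨x,y⟩. Then x centralizes a and y inverts a (y⁻¹ay = a⁻¹). If moreover b ∈ H with a² ≠ b² and b² ∉ ⟨x,y⟩, then a and b commute. -/
/-!
In a good group of exponent 4 every `⟨g²⟩` is normal of order at most 2, hence central, so all
squares are central. Then commutators are central involutions, `⁅·,·⁆` is bilinear and symmetric,
and `(gh)² = g²h²⁅g,h⁆`. Reading the dihedral or abelian quotient `⟨u,v⟩/⟨u²⟩` back in the group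
gives `⁅u,v⁆ ∈ ⟨u², v²⟩` unless `v² ∈ ⟨u²⟩`.

For `c` with `c² ∉ ⟨x², y²⟩` the squares `x², y², c²` span an elementary abelian group of rank 3,
and this dichotomy for the pairs `(c,x)`, `(c,y)`, `(c,xy)`, `(cx,y)`, `(cx,xy)`, `(cy,xy)` leaves
only `⁅c,x⁆ = 1` and `⁅c,y⁆ = c²`. Rank 2 of `⟨x², y²⟩` comes from the isomorphism with `C₄ ⋊ C₄`:
every square of `⟨x,y⟩` lies in `⟨x², y²⟩`, whereas `C₄ ⋊ C₄` has three distinct squares.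
Finally `(x, ay)` satisfies the same relations as `(x, y)`, so `⁅b, ay⁆ = b² = ⁅b, y⁆`, i.e. `b`
commutes with `a`.
-/

open Subgroup
open scoped commutatorElement

section Involutions

variable {G : Type*} [Group G] {r s t : G}

theorem mem_zpowers_iff_of_sq_eq_one (hs : s ^ 2 = 1) : t ∈ zpowers s ↔ t = 1 ∨ t = s := by
  refine ⟨fun ht => ?_, by rintro (rfl | rfl) <;> simp [mem_zpowers]⟩
  obtain ⟨k, rfl⟩ := mem_zpowers_iff.1 ht
  rw [zpow_eq_zpow_emod' k hs]
  rcases Int.emod_two_eq_zero_or_one k with h | h <;> simp [h]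

theorem mem_closure_pair_iff_of_mem_center (hs : s ∈ center G) (hs2 : s ^ 2 = 1) :
    t ∈ closure {r, s} ↔ t ∈ zpowers r ∨ s * t ∈ zpowers r := by
  have hsZ : ∀ g, g * s = s * g := mem_center_iff.1 hs
  have : (zpowers s).Normal :=
    ⟨fun n hn g => by rw [mem_center_iff.1 (zpowers_le.2 hs hn) g, mul_inv_cancel_right]; exact hn⟩
  rw [Set.insert_eq, Subgroup.closure_union, ← zpowers_eq_closure, ← zpowers_eq_closure,
    mem_sup_of_normal_right]
  constructor
  · rintro ⟨y, hy, z, hz, rfl⟩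
    rcases (mem_zpowers_iff_of_sq_eq_one hs2).1 hz with rfl | rfl
    · simpa using Or.inl hy
    · right
      rwa [← mul_assoc, ← hsZ, mul_assoc, ← sq, hs2, mul_one]
  · rintro (h | h)
    · exact ⟨t, h, 1, one_mem _, mul_one t⟩
    · refine ⟨s * t, h, s, mem_zpowers s, ?_⟩
      rw [hsZ, ← mul_assoc, ← sq, hs2, one_mul]

end Involutions

theorem commutatorElement_eq_sq_iff_conj_eq_inv {G : Type*} [Group G] {a y : G} :
    ⁅a, y⁆ = a ^ 2 ↔ y⁻¹ * a * y = a⁻¹ := by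
  constructor <;> intro h
  · calc y⁻¹ * a * y = y⁻¹ * (a⁻¹ * a ^ 2) * y := by group
      _ = a⁻¹ := by rw [← h, commutatorElement_def]; group
  · calc ⁅a, y⁆ = a * (y * a⁻¹ * y⁻¹) := by rw [commutatorElement_def]; group
      _ = a ^ 2 := by rw [← h, sq]; group

structure IsSqCentralExpFour (G : Type*) [Group G] : Prop where
  sq_mem_center : ∀ g : G, g ^ 2 ∈ center G
  pow_four : ∀ g : G, g ^ 4 = 1

namespace IsSqCentralExpFour

variable {G : Type*} [Group G] (hG : IsSqCentralExpFour G)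
include hG

theorem sq_sq_eq_one (g : G) : (g ^ 2) ^ 2 = 1 := by
  rw [← pow_mul]; exact hG.pow_four g

theorem sq_inv (g : G) : (g ^ 2)⁻¹ = g ^ 2 :=
  inv_eq_of_mul_eq_one_right (by rw [← sq, hG.sq_sq_eq_one])

theorem sq_mul_sq_sq_eq_one (g h : G) : (g ^ 2 * h ^ 2) ^ 2 = 1 := by
  have hgh : Commute (g ^ 2) (h ^ 2) := mem_center_iff.1 (hG.sq_mem_center h) (g ^ 2)
  rw [hgh.mul_pow, hG.sq_sq_eq_one, hG.sq_sq_eq_one, one_mul]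

theorem commutatorElement_mem_center (g h : G) : ⁅g, h⁆ ∈ center G := by
  have hc := mem_center_iff.1 (hG.sq_mem_center g⁻¹) h
  have : ⁅g, h⁆ = (g * h) ^ 2 * (g⁻¹) ^ 2 * (h⁻¹) ^ 2 :=
    calc ⁅g, h⁆ = g * h * g * ((g⁻¹) ^ 2 * h) * (h⁻¹) ^ 2 := by
          rw [commutatorElement_def]; group
      _ = _ := by rw [← hc]; simp only [sq]; group
  rw [this]
  exact mul_mem (mul_mem (hG.sq_mem_center _) (hG.sq_mem_center _)) (hG.sq_mem_center _)

theorem commutatorElement_mul_left (g₁ g₂ h : G) : ⁅g₁ * g₂, h⁆ = ⁅g₁, h⁆ * ⁅g₂, h⁆ := by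
  have hc := mem_center_iff.1 (hG.commutatorElement_mem_center g₂ h)
  rw [commutatorElement_mul_left_eq_conj_mul, hc, mul_inv_cancel_right, hc]

theorem commutatorElement_mul_right (g h₁ h₂ : G) : ⁅g, h₁ * h₂⁆ = ⁅g, h₁⁆ * ⁅g, h₂⁆ := by
  rw [commutatorElement_mul_right_eq_mul_conj, mul_assoc _ h₁,
    mem_center_iff.1 (hG.commutatorElement_mem_center g h₂), ← mul_assoc, mul_inv_cancel_right]

theorem commutatorElement_sq (g h : G) : ⁅g, h⁆ ^ 2 = 1 := by
  rw [sq, ← hG.commutatorElement_mul_left, ← sq, commutatorElement_eq_one_iff_mul_comm]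
  exact mem_center_iff.1 (hG.sq_mem_center g) h |>.symm

theorem commutatorElement_comm (g h : G) : ⁅h, g⁆ = ⁅g, h⁆ := by
  rw [← commutatorElement_inv, inv_eq_iff_mul_eq_one, ← sq, hG.commutatorElement_sq]

theorem sq_mul (g h : G) : (g * h) ^ 2 = g ^ 2 * h ^ 2 * ⁅g, h⁆ := by
  have hc := mem_center_iff.1 (hG.commutatorElement_mem_center h g)
  calc (g * h) ^ 2 = g * ⁅h, g⁆ * g * h * h := by rw [sq, commutatorElement_def]; group
    _ = ⁅h, g⁆ * (g * g * h * h) := by rw [hc]; group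
    _ = g ^ 2 * h ^ 2 * ⁅g, h⁆ := by rw [← hc, hG.commutatorElement_comm, sq, sq, ← mul_assoc]

theorem sq_mul_of_commutatorElement_eq_sq {g h : G} (hgh : ⁅g, h⁆ = g ^ 2) :
    (g * h) ^ 2 = h ^ 2 := by
  rw [hG.sq_mul, hgh, mul_assoc, mem_center_iff.1 (hG.sq_mem_center g), ← mul_assoc, ← sq,
    hG.sq_sq_eq_one, one_mul]

theorem commutatorElement_mem_of_mem_closure {x y h g : G} {S : Subgroup G} (hx : ⁅x, h⁆ ∈ S)
    (hy : ⁅y, h⁆ ∈ S) (hg : g ∈ closure {x, y}) : ⁅g, h⁆ ∈ S := by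
  let φ : G →* G := MonoidHom.mk' (fun g => ⁅g, h⁆) fun a b => hG.commutatorElement_mul_left a b h
  have : closure {x, y} ≤ S.comap φ :=
    (closure_le _).2 (by simp [Set.insert_subset_iff, φ, hx, hy])
  exact this hg

theorem sq_mem_closure_sq_of_mem_closure {x y k : G} (hxy : ⁅x, y⁆ ∈ closure {x ^ 2, y ^ 2})
    (hk : k ∈ closure {x, y}) : k ^ 2 ∈ closure {x ^ 2, y ^ 2} := by
  have hyx : ⁅y, x⁆ ∈ closure {x ^ 2, y ^ 2} := hG.commutatorElement_comm x y ▸ hxy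
  have hcomm : ∀ g ∈ closure {x, y}, ∀ h ∈ closure {x, y}, ⁅g, h⁆ ∈ closure {x ^ 2, y ^ 2} := by
    intro g hg h hh
    refine hG.commutatorElement_mem_of_mem_closure ?_ ?_ hg <;> rw [← hG.commutatorElement_comm]
    · exact hG.commutatorElement_mem_of_mem_closure (by simp) hyx hh
    · exact hG.commutatorElement_mem_of_mem_closure hxy (by simp) hh
  induction hk using closure_induction with
  | mem g hg =>
    rcases hg with rfl | rfl <;> exact subset_closure (by simp)
  | one => simp
  | mul g₁ g₂ hg₁ hg₂ ih₁ ih₂ =>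
    rw [hG.sq_mul]; exact mul_mem (mul_mem ih₁ ih₂) (hcomm _ hg₁ _ hg₂)
  | inv g hg ih => rw [inv_pow]; exact inv_mem ih

end IsSqCentralExpFour

theorem DihedralGroup.commutatorElement_eq_one_or_eq_sq_or_sq_eq_one {n : ℕ} (hn : n ∣ 4)
    {p : DihedralGroup n} (hp : p ^ 2 = 1) (q : DihedralGroup n) :
    ⁅p, q⁆ = 1 ∨ ⁅p, q⁆ = q ^ 2 ∨ q ^ 2 = 1 := by
  have : n = 1 ∨ n = 2 ∨ n = 4 := by
    have := Nat.le_of_dvd (by norm_num) hn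
    interval_cases n <;> simp_all
  rcases this with rfl | rfl | rfl <;> revert p q <;> decide

theorem IsDihedralGroup.commutatorElement_eq_one_or_eq_sq_or_sq_eq_one {Q : Type*} [Group Q]
    (hQ : IsDihedralGroup Q) (h4 : ∀ z : Q, z ^ 4 = 1) {p : Q} (hp : p ^ 2 = 1) (q : Q) :
    ⁅p, q⁆ = 1 ∨ ⁅p, q⁆ = q ^ 2 ∨ q ^ 2 = 1 := by
  obtain ⟨n, -, ⟨e⟩⟩ := hQ
  have hn : n ∣ 4 := by
    rw [← DihedralGroup.orderOf_r_one (n := n)]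
    apply orderOf_dvd_of_pow_eq_one
    simpa using congrArg e (h4 (e.symm (DihedralGroup.r 1)))
  have := DihedralGroup.commutatorElement_eq_one_or_eq_sq_or_sq_eq_one hn
    (p := e p) (by rw [← map_pow, hp, map_one]) (e q)
  simpa only [← map_commutatorElement, ← map_pow, e.injective.eq_iff, map_eq_one_iff _ e.injective]
    using this

namespace IsGood

variable {G : Type*} [Group G] (hgood : IsGood G) (h4 : ∀ g : G, g ^ 4 = 1)
include hgood h4

theorem sq_mem_center (g : G) : g ^ 2 ∈ center G := by
  refine mem_center_iff.2 fun h => ?_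
  have hsq : (g ^ 2) ^ 2 = 1 := by rw [← pow_mul]; exact h4 g
  obtain ⟨hn, -⟩ := hgood.2 g g
  rcases (mem_zpowers_iff_of_sq_eq_one hsq).1 (hn.conj_mem _ (mem_zpowers _) h) with h1 | h1
  · rw [mul_inv_eq_one, mul_eq_left] at h1
    rw [h1, one_mul, mul_one]
  · exact mul_inv_eq_iff_eq_mul.1 h1

theorem isSqCentralExpFour : IsSqCentralExpFour G := ⟨hgood.sq_mem_center h4, h4⟩

theorem commutatorElement_mem_closure_sq (u v : G) :
    ⁅u, v⁆ ∈ closure {u ^ 2, v ^ 2} ∨ v ^ 2 ∈ zpowers (u ^ 2) := by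
  obtain ⟨hn, hcase⟩ := hgood.2 u v
  have := hn.subgroupOf (closure {u, v})
  set K := closure ({u, v} : Set G)
  set N := (zpowers (u ^ 2)).subgroupOf K
  let π := QuotientGroup.mk' N
  have hπ : ∀ w : K, π w = 1 ↔ (w : G) ∈ zpowers (u ^ 2) := fun w => by
    rw [← MonoidHom.mem_ker, QuotientGroup.ker_mk', mem_subgroupOf]
  let u' : K := ⟨u, subset_closure (by simp)⟩
  let v' : K := ⟨v, subset_closure (by simp)⟩
  have hp : π u' ^ 2 = 1 := by rw [← map_pow, hπ]; exact mem_zpowers _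
  have h4Q : ∀ z : K ⧸ N, z ^ 4 = 1 := by
    intro z
    obtain ⟨w, rfl⟩ := QuotientGroup.mk'_surjective N z
    rw [← map_pow, show w ^ 4 = 1 from Subtype.ext (h4 w), map_one]
  have key : ⁅π u', π v'⁆ = 1 ∨ ⁅π u', π v'⁆ = π v' ^ 2 ∨ π v' ^ 2 = 1 := by
    rcases hcase with hab | hdih
    · exact Or.inl (commutatorElement_eq_one_iff_mul_comm.2 (hab _ _))
    · exact hdih.commutatorElement_eq_one_or_eq_sq_or_sq_eq_one h4Q hp _
  have hS : zpowers (u ^ 2) ≤ closure {u ^ 2, v ^ 2} := zpowers_le.2 (subset_closure (by simp))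
  rw [← map_commutatorElement, ← map_pow] at key
  rcases key with h | h | h
  · exact Or.inl (hS ((hπ _).1 h))
  · left
    have : ⁅u, v⁆ * (v ^ 2)⁻¹ ∈ zpowers (u ^ 2) :=
      (hπ (⁅u', v'⁆ * (v' ^ 2)⁻¹)).1 (by rw [map_mul, map_inv, h, mul_inv_cancel])
    exact (mul_mem_cancel_right (inv_mem (subset_closure (by simp)))).1 (hS this)
  · exact Or.inr ((hπ _).1 h)

theorem commutatorElement_mem_closure_of_sq_eq {u v s t : G} (hu : u ^ 2 = s) (hv : v ^ 2 = t)
    (ht : t ≠ 1) (hts : t ≠ s) : ⁅u, v⁆ ∈ closure {s, t} := by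
  subst hu hv
  refine (hgood.commutatorElement_mem_closure_sq h4 u v).resolve_right ?_
  rw [mem_zpowers_iff_of_sq_eq_one (by rw [← pow_mul]; exact h4 u)]
  tauto

end IsGood

open DihedralGroup in
def C4rC4rels.toD4D4 : PresentedGroup C4rC4rels →* DihedralGroup 4 × DihedralGroup 4 :=
  PresentedGroup.toGroup (f := ![(r 1, 1), (sr 0, r 1)]) <| by
    rintro _ (rfl | rfl | rfl) <;>
      simp only [map_pow, map_mul, map_inv, FreeGroup.lift_apply_of] <;> decide

theorem C4rC4rels.sq_of_ne_one_and_ne :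
    (PresentedGroup.of 0 : PresentedGroup C4rC4rels) ^ 2 ≠ 1 ∧
      (PresentedGroup.of 1 : PresentedGroup C4rC4rels) ^ 2 ≠ 1 ∧
      (PresentedGroup.of 0 : PresentedGroup C4rC4rels) ^ 2 ≠ PresentedGroup.of 1 ^ 2 := by
  refine ⟨fun h => ?_, fun h => ?_, fun h => ?_⟩ <;>
    have := congrArg C4rC4rels.toD4D4 h <;>
    simp only [C4rC4rels.toD4D4, map_pow, map_one, PresentedGroup.toGroup.of] at this <;>
    exact absurd this (by decide)

/-- The consequences of `⟨x, y⟩ ≅ C₄ ⋊ C₄` used in the argument. -/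
structure IsC4C4Pair {G : Type*} [Group G] (x y : G) : Prop where
  commutatorElement_eq : ⁅x, y⁆ = x ^ 2
  sq_left_ne_one : x ^ 2 ≠ 1
  sq_right_ne_one : y ^ 2 ≠ 1
  sq_left_ne_sq_right : x ^ 2 ≠ y ^ 2

theorem IsC4C4Pair.of_mulEquiv {G : Type*} [Group G] (hG : IsSqCentralExpFour G) {x y : G}
    (hxy : ⁅x, y⁆ = x ^ 2) (e : closure {x, y} ≃* PresentedGroup C4rC4rels) : IsC4C4Pair x y := by
  have hsq (p) : ((e.symm p : G)) ^ 2 ∈ closure {x ^ 2, y ^ 2} :=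
    hG.sq_mem_closure_sq_of_mem_closure (hxy ▸ subset_closure (by simp)) (e.symm p).2
  have hsq_inj (p q) (h : (e.symm p : G) ^ 2 = (e.symm q : G) ^ 2) : p ^ 2 = q ^ 2 := by
    apply e.symm.injective
    rw [map_pow, map_pow]
    exact Subtype.ext (by simpa using h)
  obtain ⟨h0, h1, h01⟩ := C4rC4rels.sq_of_ne_one_and_ne
  have hdeg (t : G) (ht : t ^ 2 = 1) (hx : x ^ 2 ∈ zpowers t) (hy : y ^ 2 ∈ zpowers t) : False := by
    have hle : closure {x ^ 2, y ^ 2} ≤ zpowers t :=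
      (closure_le _).2 (by simp [Set.insert_subset_iff, hx, hy])
    have hgen (p) (hp : p ^ 2 ≠ 1) : (e.symm p : G) ^ 2 = t :=
      ((mem_zpowers_iff_of_sq_eq_one ht).1 (hle (hsq p))).resolve_left
        fun h => hp (by simpa using hsq_inj p 1 (by simpa using h))
    exact h01 (hsq_inj _ _ ((hgen _ h0).trans (hgen _ h1).symm))
  refine ⟨hxy, fun h => ?_, fun h => ?_, fun h => ?_⟩
  · exact hdeg (y ^ 2) (hG.sq_sq_eq_one y) (h ▸ one_mem _) (mem_zpowers _)
  · exact hdeg (x ^ 2) (hG.sq_sq_eq_one x) (mem_zpowers _) (h ▸ one_mem _)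
  · exact hdeg (x ^ 2) (hG.sq_sq_eq_one x) (mem_zpowers _) (h ▸ mem_zpowers _)

theorem IsC4C4Pair.mul_right {G : Type*} [Group G] (hG : IsSqCentralExpFour G) {x y a : G}
    (hxy : IsC4C4Pair x y) (hax : ⁅a, x⁆ = 1) (hay : ⁅a, y⁆ = a ^ 2) : IsC4C4Pair x (a * y) := by
  have hay2 := hG.sq_mul_of_commutatorElement_eq_sq hay
  refine ⟨?_, hxy.sq_left_ne_one, hay2 ▸ hxy.sq_right_ne_one, hay2 ▸ hxy.sq_left_ne_sq_right⟩
  rw [hG.commutatorElement_mul_right, hG.commutatorElement_comm, hax, one_mul,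
    hxy.commutatorElement_eq]

namespace IsGood

variable {G : Type*} [Group G] (hgood : IsGood G) (h4 : ∀ g : G, g ^ 4 = 1) {x y c : G}
  (hxy : IsC4C4Pair x y) (hc : c ^ 2 ∉ closure {x ^ 2, y ^ 2})
include hgood h4 hxy hc

theorem commutatorElement_eq_one_of_sq_notMem : ⁅c, x⁆ = 1 := by
  have hG := hgood.isSqCentralExpFour h4
  have hXS : x ^ 2 ∈ closure {x ^ 2, y ^ 2} := subset_closure (by simp)
  have hYS : y ^ 2 ∈ closure {x ^ 2, y ^ 2} := subset_closure (by simp)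
  have hxy2 := hG.sq_mul_of_commutatorElement_eq_sq hxy.commutatorElement_eq
  have hα : ⁅c, x⁆ ∈ closure {c ^ 2, x ^ 2} :=
    hgood.commutatorElement_mem_closure_of_sq_eq h4 rfl rfl hxy.sq_left_ne_one
      fun h => hc (h ▸ hXS)
  have hβ : ⁅c, y⁆ ∈ closure {c ^ 2, y ^ 2} :=
    hgood.commutatorElement_mem_closure_of_sq_eq h4 rfl rfl hxy.sq_right_ne_one
      fun h => hc (h ▸ hYS)
  have hαβ : ⁅c, x⁆ * ⁅c, y⁆ ∈ closure {c ^ 2, y ^ 2} :=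
    hG.commutatorElement_mul_right c x y ▸ hgood.commutatorElement_mem_closure_of_sq_eq h4 rfl hxy2
      hxy.sq_right_ne_one fun h => hc (h ▸ hYS)
  have hα' : ⁅c, x⁆ ∈ closure {c ^ 2, y ^ 2} := (mul_mem_cancel_right hβ).1 hαβ
  have hXCY : x ^ 2 ∉ closure {c ^ 2, y ^ 2} := by
    rw [Set.pair_comm, mem_closure_pair_iff_of_mem_center (hG.sq_mem_center c) (hG.sq_sq_eq_one c),
      mem_zpowers_iff_of_sq_eq_one (hG.sq_sq_eq_one y)]
    rintro ((h | h) | h)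
    · exact hxy.sq_left_ne_one h
    · exact hxy.sq_left_ne_sq_right h
    · exact hc ((mul_mem_cancel_right hXS).1 (zpowers_le.2 hYS h))
  have hαC : ⁅c, x⁆ ∈ zpowers (c ^ 2) := by
    refine ((mem_closure_pair_iff_of_mem_center (hG.sq_mem_center x) (hG.sq_sq_eq_one x)).1
      hα).resolve_right fun h => hXCY ?_
    exact (mul_mem_cancel_right hα').1 (zpowers_le.2 (subset_closure (by simp)) h)
  -- if `⁅c, x⁆ = c²`, then `(c x)² = x²` and `⁅c x, x⁆ = c²` would lie in `⟨x², y²⟩`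
  refine ((mem_zpowers_iff_of_sq_eq_one (hG.sq_sq_eq_one c)).1 hαC).resolve_right fun hαC => hc ?_
  have hcx : (c * x) ^ 2 = x ^ 2 := by
    rw [hG.sq_mul, hαC, mul_assoc, mem_center_iff.1 (hG.sq_mem_center c), ← mul_assoc, ← sq,
      hG.sq_sq_eq_one, one_mul]
  have hYX : y ^ 2 ≠ x ^ 2 := hxy.sq_left_ne_sq_right.symm
  have h1 := hgood.commutatorElement_mem_closure_of_sq_eq h4 hcx rfl hxy.sq_right_ne_one hYX
  have h2 := hgood.commutatorElement_mem_closure_of_sq_eq h4 hcx hxy2 hxy.sq_right_ne_one hYX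
  rw [hG.commutatorElement_mul_right] at h2
  have h3 := (mul_mem_cancel_right h1).1 h2
  rwa [hG.commutatorElement_mul_left, commutatorElement_self, mul_one, hαC] at h3

theorem commutatorElement_eq_sq_of_sq_notMem : ⁅c, y⁆ = c ^ 2 := by
  have hG := hgood.isSqCentralExpFour h4
  have hXS : x ^ 2 ∈ closure {x ^ 2, y ^ 2} := subset_closure (by simp)
  have hYS : y ^ 2 ∈ closure {x ^ 2, y ^ 2} := subset_closure (by simp)
  have hxy2 := hG.sq_mul_of_commutatorElement_eq_sq hxy.commutatorElement_eq
  have hα := hgood.commutatorElement_eq_one_of_sq_notMem h4 hxy hc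
  have hcx : (c * x) ^ 2 = c ^ 2 * x ^ 2 := by rw [hG.sq_mul, hα, mul_one]
  have hCX : c ^ 2 * x ^ 2 ∈ center G := mul_mem (hG.sq_mem_center c) (hG.sq_mem_center x)
  have h1 : ⁅c, y⁆ * x ^ 2 ∈ closure {c ^ 2 * x ^ 2, y ^ 2} := by
    have := hgood.commutatorElement_mem_closure_of_sq_eq h4 hcx rfl hxy.sq_right_ne_one
      fun h => hc ((mul_mem_cancel_right hXS).1 (h ▸ hYS))
    rwa [hG.commutatorElement_mul_left, hxy.commutatorElement_eq] at this
  have hXCXY : x ^ 2 ∉ closure {c ^ 2 * x ^ 2, y ^ 2} := by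
    rw [Set.pair_comm, mem_closure_pair_iff_of_mem_center hCX (hG.sq_mul_sq_sq_eq_one c x),
      mem_zpowers_iff_of_sq_eq_one (hG.sq_sq_eq_one y)]
    rintro ((h | h) | h)
    · exact hxy.sq_left_ne_one h
    · exact hxy.sq_left_ne_sq_right h
    · rw [mul_assoc, ← sq, hG.sq_sq_eq_one, mul_one] at h
      exact hc (zpowers_le.2 hYS h)
  have hβ : ⁅c, y⁆ ∈ closure {y ^ 2, c ^ 2} := Set.pair_comm (c ^ 2) (y ^ 2) ▸
    hgood.commutatorElement_mem_closure_of_sq_eq h4 rfl rfl hxy.sq_right_ne_one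
      fun h => hc (h ▸ hYS)
  rcases (mem_closure_pair_iff_of_mem_center (hG.sq_mem_center c) (hG.sq_sq_eq_one c)).1 hβ
    with h | h
  · refine absurd ((mul_mem_cancel_left ?_).1 h1) hXCXY
    exact zpowers_le.2 (subset_closure (by simp)) h
  rcases (mem_zpowers_iff_of_sq_eq_one (hG.sq_sq_eq_one y)).1 h with h | h
  · rw [eq_inv_of_mul_eq_one_right h, hG.sq_inv]
  · -- `⁅c, y⁆ = c² y²` would give `(c y)² = 1`, so `⁅c y, x y⁆ = c² y² x²` would lie in `⟨y²⟩`
    have hβ : ⁅c, y⁆ = c ^ 2 * y ^ 2 := by rw [eq_inv_mul_of_mul_eq h, hG.sq_inv]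
    have hcy : (c * y) ^ 2 = 1 := by rw [hG.sq_mul, hβ, ← sq, hG.sq_mul_sq_sq_eq_one]
    have h2 := hgood.commutatorElement_mem_closure_of_sq_eq h4 hcy hxy2 hxy.sq_right_ne_one
      hxy.sq_right_ne_one
    rw [hG.commutatorElement_mul_left, hG.commutatorElement_mul_right,
      hG.commutatorElement_mul_right, hα, hβ, commutatorElement_self,
      hG.commutatorElement_comm x y, hxy.commutatorElement_eq, one_mul, mul_one] at h2
    have hle : closure {1, y ^ 2} ≤ closure {x ^ 2, y ^ 2} :=
      (closure_le _).2 (by simp [Set.insert_subset_iff, one_mem, hYS])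
    exact absurd ((mul_mem_cancel_right hYS).1 ((mul_mem_cancel_right hXS).1 (hle h2))) hc

end IsGood

/-- **Lemma 4.9**: in a good group of exponent 4, if `xʸ = x⁻¹`,
`⟨x,y⟩ ≅ C₄ ⋊ C₄` and `a² ∉ ⟨x,y⟩`, then `x` centralizes and `y` inverts `a`;
and if moreover `a² ≠ b² ∉ ⟨x,y⟩` then `a` and `b` commute. -/
theorem good_exponent_four_C4C4 (H : Type*) [Group H] (hgood : IsGood H)
    (hexp : Monoid.exponent H = 4) (a x y : H) (hxy : y⁻¹ * x * y = x⁻¹)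
    (hiso : Nonempty (↥(Subgroup.closure {x, y}) ≃* PresentedGroup C4rC4rels))
    (ha : a ^ 2 ∉ Subgroup.closure {x, y}) :
    (x * a = a * x ∧ y⁻¹ * a * y = a⁻¹) ∧
    (∀ b : H, a ^ 2 ≠ b ^ 2 → b ^ 2 ∉ Subgroup.closure {x, y} → a * b = b * a) := by
  have h4 (g : H) : g ^ 4 = 1 := hexp ▸ Monoid.pow_exponent_eq_one g
  have hG := hgood.isSqCentralExpFour h4
  have hpair := IsC4C4Pair.of_mulEquiv hG (commutatorElement_eq_sq_iff_conj_eq_inv.2 hxy) hiso.some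
  have hS : closure {x ^ 2, y ^ 2} ≤ closure {x, y} :=
    (closure_le _).2 <| Set.pair_subset (pow_mem (subset_closure (by simp)) 2)
      (pow_mem (subset_closure (by simp)) 2)
  have hax := hgood.commutatorElement_eq_one_of_sq_notMem h4 hpair fun h => ha (hS h)
  have hay := hgood.commutatorElement_eq_sq_of_sq_notMem h4 hpair fun h => ha (hS h)
  refine ⟨⟨(commutatorElement_eq_one_iff_mul_comm.1 hax).symm,
    commutatorElement_eq_sq_iff_conj_eq_inv.1 hay⟩, fun b _ hb => ?_⟩
  have hb : b ^ 2 ∉ closure {x ^ 2, y ^ 2} := fun h => hb (hS h)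
  have hbay := hgood.commutatorElement_eq_sq_of_sq_notMem h4 (c := b) (hpair.mul_right hG hax hay)
    (by rwa [hG.sq_mul_of_commutatorElement_eq_sq hay])
  rw [hG.commutatorElement_mul_right, hgood.commutatorElement_eq_sq_of_sq_notMem h4 hpair hb,
    mul_eq_right, hG.commutatorElement_comm] at hbay
  exact commutatorElement_eq_one_iff_mul_comm.1 hbay
end

section
/- If H is a nonabelian good group of exponent 4, then the Frattini subgroup of the centre of H has order at most 2. -/
open Subgroup
open scoped commutatorElement

section

variable {G : Type*} [Group G]

theorem Subgroup.normal_of_forall_sq_mem {K : Subgroup G}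
    (hK : ∀ g, g ^ 2 ∈ K) : K.Normal where
  conj_mem n hn g := by
    have h : g * n * g⁻¹ = (g * n) ^ 2 * n⁻¹ * g⁻¹ ^ 2 := by simp only [pow_two]; group
    rw [h]
    exact mul_mem (mul_mem (hK _) (inv_mem hn)) (hK _)

theorem Subgroup.exists_le_maximal_notMem {K : Subgroup G} {a : G}
    (ha : a ∉ K) : ∃ M, K ≤ M ∧ Maximal (a ∉ ·) M := by
  obtain ⟨M, hKM, hM⟩ := zorn_le_nonempty₀ {N : Subgroup G | K ≤ N ∧ a ∉ N}
    (fun c hc hchain N hN => ⟨sSup c, ⟨(hc hN).1.trans (le_sSup hN), fun haS => by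
      obtain ⟨N', hN', haN'⟩ := (mem_sSup_of_directedOn ⟨N, hN⟩ hchain.directedOn).mp haS
      exact (hc hN').2 haN'⟩, fun _ => le_sSup⟩) K ⟨le_rfl, ha⟩
  exact ⟨M, hKM, hM.1.2, fun N haN hMN => hM.2 ⟨hKM.trans hMN, haN⟩ hMN⟩

theorem Subgroup.isCoatom_of_maximal_notMem {M : Subgroup G} {a : G}
    (hsq : ∀ g, g ^ 2 ∈ M) (hM : Maximal (a ∉ ·) M) : IsCoatom M := by
  have := normal_of_forall_sq_mem hsq
  refine ⟨fun h => hM.1 (h ▸ mem_top a), fun N hMN => eq_top_iff.mpr fun g _ => ?_⟩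
  have haN : a ∈ N := by
    by_contra haN
    exact hMN.not_ge (hM.2 haN hMN.le)
  by_cases hgM : g ∈ M
  · exact hMN.le hgM
  have hag : a ∈ M ⊔ zpowers g := by
    by_contra hag
    exact hgM (hM.2 hag le_sup_left (mem_sup_right (mem_zpowers g)))
  obtain ⟨m, hm, _, ⟨k, rfl⟩, hmk⟩ := mem_sup_of_normal_left.mp hag
  have hg2 : ∀ j : ℤ, g ^ (2 * j) ∈ M := fun j => by
    rw [zpow_mul]; exact_mod_cast zpow_mem (hsq g) j
  obtain ⟨j, rfl | rfl⟩ := Int.even_or_odd' k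
  · exact absurd (hmk ▸ mul_mem hm (hg2 j)) hM.1
  · have h : g = (m * g ^ (2 * j))⁻¹ * a := by rw [← hmk]; group
    rw [h]
    exact mul_mem (inv_mem (hMN.le (mul_mem hm (hg2 j)))) haN

theorem frattini_le_of_forall_sq_mem {K : Subgroup G}
    (hK : ∀ g, g ^ 2 ∈ K) : frattini G ≤ K := by
  intro a ha
  by_contra haK
  obtain ⟨M, hKM, hM⟩ := exists_le_maximal_notMem haK
  exact hM.1 (frattini_le_coatom (isCoatom_of_maximal_notMem (fun g => hKM (hK g)) hM) ha)

theorem DihedralGroup.commutatorElement_eq_one_or_sq_eq {n : ℕ} (hn : n ∣ 4)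
    (p q : DihedralGroup n) : ⁅p, q⁆ = 1 ∨ q ^ 2 = 1 ∨ q ^ 2 = ⁅p, q⁆ := by
  have hn' : n = 1 ∨ n = 2 ∨ n = 4 := by
    have := Nat.le_of_dvd (by norm_num) hn
    interval_cases n <;> omega
  rcases hn' with rfl | rfl | rfl <;> revert p q <;> decide

theorem IsDihedralGroup.exists_dvd_four {Q : Type*} [Group Q] (hQ : IsDihedralGroup Q)
    (h4 : ∀ q : Q, q ^ 4 = 1) : ∃ n, n ∣ 4 ∧ Nonempty (Q ≃* DihedralGroup n) := by
  obtain ⟨n, -, ⟨e⟩⟩ := hQ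
  refine ⟨n, ?_, ⟨e⟩⟩
  rw [← DihedralGroup.orderOf_r_one (n := n)]
  apply orderOf_dvd_of_pow_eq_one
  rw [← e.apply_symm_apply (DihedralGroup.r 1), ← map_pow, h4, map_one]

theorem IsDihedralGroup.commutatorElement_eq_one_or_sq_eq {Q : Type*} [Group Q]
    (hQ : IsDihedralGroup Q) (h4 : ∀ q : Q, q ^ 4 = 1) (p q : Q) :
    ⁅p, q⁆ = 1 ∨ q ^ 2 = 1 ∨ q ^ 2 = ⁅p, q⁆ := by
  obtain ⟨n, hn, ⟨e⟩⟩ := hQ.exists_dvd_four h4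
  simpa only [← map_commutatorElement, ← map_pow, e.map_eq_one_iff, e.apply_eq_iff_eq] using
    DihedralGroup.commutatorElement_eq_one_or_sq_eq hn (e p) (e q)

theorem eq_one_or_eq_of_mem_zpowers {s x : G} (hs : s ^ 2 = 1) (hx : x ∈ zpowers s) :
    x = 1 ∨ x = s := by
  obtain ⟨k, rfl⟩ := hx
  obtain ⟨j, rfl | rfl⟩ := Int.even_or_odd' k
  · left
    simp [zpow_mul, hs]
  · right
    simp [zpow_add, zpow_mul, hs]

theorem IsGood.commutatorElement_mem_or_sq_mem_or (hG : IsGood G) (h4 : ∀ x : G, x ^ 4 = 1)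
    (g h : G) : ⁅g, h⁆ ∈ zpowers (g ^ 2) ∨ h ^ 2 ∈ zpowers (g ^ 2) ∨
      (h ^ 2)⁻¹ * ⁅g, h⁆ ∈ zpowers (g ^ 2) := by
  obtain ⟨hN, hQ⟩ := hG.2 g h
  have := hN.subgroupOf (closure {g, h})
  set N := (zpowers (g ^ 2)).subgroupOf (closure {g, h})
  have hQ4 : ∀ q : closure {g, h} ⧸ N, q ^ 4 = 1 := by
    refine fun q => QuotientGroup.induction_on q fun x => ?_
    rw [← QuotientGroup.mk_pow, show x ^ 4 = 1 from Subtype.ext (h4 x), QuotientGroup.mk_one]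
  have hsq_or : ∀ p q : closure {g, h} ⧸ N, ⁅p, q⁆ = 1 ∨ q ^ 2 = 1 ∨ q ^ 2 = ⁅p, q⁆ := by
    rcases hQ with hcomm | hdih
    · exact fun p q => Or.inl (commutatorElement_eq_one_iff_commute.mpr (hcomm p q))
    · exact hdih.commutatorElement_eq_one_or_sq_eq hQ4
  set gg : closure {g, h} := ⟨g, subset_closure (by simp)⟩
  set hh : closure {g, h} := ⟨h, subset_closure (by simp)⟩
  have hmk : ∀ x : closure {g, h}, (x : closure {g, h} ⧸ N) = 1 ↔ (x : G) ∈ zpowers (g ^ 2) :=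
    fun x => QuotientGroup.eq_one_iff x |>.trans mem_subgroupOf
  rcases hsq_or gg hh with hc | hsq | hsq
  · exact Or.inl ((hmk ⁅gg, hh⁆).mp hc)
  · exact Or.inr (Or.inl ((hmk (hh ^ 2)).mp hsq))
  · refine Or.inr (Or.inr ((hmk ((hh ^ 2)⁻¹ * ⁅gg, hh⁆)).mp ?_))
    rw [QuotientGroup.mk_mul, QuotientGroup.mk_inv, QuotientGroup.mk_pow, hsq]
    exact inv_mul_cancel _

theorem IsGood.sq_mem_center_s16 (hG : IsGood G) (h4 : ∀ x : G, x ^ 4 = 1) (g : G) :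
    g ^ 2 ∈ center G := by
  obtain ⟨hN, -⟩ := hG.2 g g
  have hg4 : (g ^ 2) ^ 2 = 1 := by rw [← pow_mul, h4]
  refine mem_center_iff.mpr fun k => ?_
  rcases eq_one_or_eq_of_mem_zpowers hg4 (hN.conj_mem _ (mem_zpowers _) k) with h | h
  · rw [conj_eq_one_iff.mp h, mul_one, one_mul]
  · exact mul_inv_eq_iff_eq_mul.mp h

theorem commutatorElement_mul_left_of_mem_center {t : G} (ht : t ∈ center G) (x h : G) :
    ⁅x * t, h⁆ = ⁅x, h⁆ := by
  rw [commutatorElement_def, commutatorElement_def, mul_inv_rev, mul_assoc x t h,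
    ← mem_center_iff.mp ht h]
  group

theorem commutatorElement_mul_right_of_mem_center {t : G} (ht : t ∈ center G) (x h : G) :
    ⁅x, h * t⁆ = ⁅x, h⁆ := by
  rw [commutatorElement_def, commutatorElement_def, mul_inv_rev, mul_assoc x (h * t),
    mul_assoc h, ← mem_center_iff.mp ht x⁻¹]
  group

theorem mul_sq_of_mem_center {t : G} (ht : t ∈ center G) (x : G) : (x * t) ^ 2 = x ^ 2 * t ^ 2 :=
  (show Commute x t from mem_center_iff.mp ht x).mul_pow 2

theorem commutatorElement_sq_eq_one (hcen : ∀ g : G, g ^ 2 ∈ center G)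
    (h4 : ∀ x : G, x ^ 4 = 1) (x y : G) : ⁅x, y⁆ ^ 2 = 1 := by
  have hsq : ∀ g : G, (g ^ 2) ^ 2 = 1 := fun g => by rw [← pow_mul, h4]
  have h : ⁅x, y⁆ = x ^ 2 * (x⁻¹ * y) ^ 2 * y⁻¹ ^ 2 := by
    simp only [commutatorElement_def, pow_two]; group
  rw [h, mul_sq_of_mem_center (hcen _), mul_sq_of_mem_center (hcen _), hsq, hsq, hsq,
    mul_one, mul_one]

theorem IsGood.sq_mem_of_mem_center (hG : IsGood G) (h4 : ∀ x : G, x ^ 4 = 1) {x h t : G}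
    (ht : t ∈ center G) (hc : ⁅x, h⁆ ≠ 1) (hh : h ^ 2 ∉ zpowers ⁅x, h⁆) :
    t ^ 2 ∈ ({(x ^ 2)⁻¹ * ⁅x, h⁆, (x ^ 2)⁻¹ * h ^ 2, (x ^ 2)⁻¹ * ((h ^ 2)⁻¹ * ⁅x, h⁆)} : Set G) := by
  have hxt4 : ((x * t) ^ 2) ^ 2 = 1 := by rw [← pow_mul, h4]
  have hxt : ∀ {v : G}, v = (x * t) ^ 2 → t ^ 2 = (x ^ 2)⁻¹ * v := fun hv => by
    rw [hv, mul_sq_of_mem_center ht, inv_mul_cancel_left]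
  have key := hG.commutatorElement_mem_or_sq_mem_or h4 (x * t) h
  rw [commutatorElement_mul_left_of_mem_center ht] at key
  rcases key with hk | hk | hk <;> rcases eq_one_or_eq_of_mem_zpowers hxt4 hk with h1 | h1
  · exact absurd h1 hc
  · exact Or.inl (hxt h1)
  · exact absurd (h1 ▸ one_mem _) hh
  · exact Or.inr (Or.inl (hxt h1))
  · exact absurd (inv_mul_eq_one.mp h1 ▸ mem_zpowers _) hh
  · exact Or.inr (Or.inr (hxt h1))

theorem IsGood.sq_mem_zpowers_commutatorElement (hG : IsGood G) (h4 : ∀ x : G, x ^ 4 = 1)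
    {z w : G} (hz : z ∈ center G) (hw : w ∈ center G) (hz2 : z ^ 2 ≠ 1) (hw2 : w ^ 2 ≠ 1)
    (hzw : z ^ 2 ≠ w ^ 2) {x h : G} (hc : ⁅x, h⁆ ≠ 1) : h ^ 2 ∈ zpowers ⁅x, h⁆ := by
  classical
  by_contra hh
  set T : Finset G := {(x ^ 2)⁻¹ * ⁅x, h⁆, (x ^ 2)⁻¹ * h ^ 2, (x ^ 2)⁻¹ * ((h ^ 2)⁻¹ * ⁅x, h⁆)}
  have hT : ∀ t ∈ center G, t ^ 2 ∈ T := fun t ht => by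
    simp only [T, Finset.mem_insert, Finset.mem_singleton]
    simpa only [Set.mem_insert_iff, Set.mem_singleton_iff] using
      hG.sq_mem_of_mem_center h4 ht hc hh
  have hsub : ({1, z ^ 2, w ^ 2, z ^ 2 * w ^ 2} : Finset G) ⊆ T := by
    intro p hp
    simp only [Finset.mem_insert, Finset.mem_singleton] at hp
    rcases hp with rfl | rfl | rfl | rfl
    · simpa using hT 1 (one_mem _)
    · exact hT z hz
    · exact hT w hw
    · rw [← mul_sq_of_mem_center hw]
      exact hT _ (mul_mem hz hw)
  have hzw2 : z ^ 2 * w ^ 2 ≠ 1 := fun h1 =>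
    hzw (mul_left_cancel (h1.trans (by rw [← pow_add, h4] : z ^ 2 * z ^ 2 = 1).symm)).symm
  have hcard : ({1, z ^ 2, w ^ 2, z ^ 2 * w ^ 2} : Finset G).card = 4 := by
    rw [Finset.card_insert_of_notMem, Finset.card_insert_of_notMem, Finset.card_pair]
    all_goals simp [hz2, hw2, hzw, hz2.symm, hw2.symm, hzw2.symm]
  have := (Finset.card_le_card hsub).trans Finset.card_le_three
  omega

theorem IsGood.sq_eq_sq_of_mem_center (hG : IsGood G) (h4 : ∀ x : G, x ^ 4 = 1) {x y : G}
    (hxy : ⁅x, y⁆ ≠ 1) {z w : G} (hz : z ∈ center G) (hw : w ∈ center G) (hz2 : z ^ 2 ≠ 1)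
    (hw2 : w ^ 2 ≠ 1) : z ^ 2 = w ^ 2 := by
  by_contra hzw
  have hy : ∀ s ∈ center G, (y * s) ^ 2 ∈ zpowers ⁅x, y⁆ := fun s hs => by
    rw [← commutatorElement_mul_right_of_mem_center hs]
    refine hG.sq_mem_zpowers_commutatorElement h4 hz hw hz2 hw2 hzw ?_
    rwa [commutatorElement_mul_right_of_mem_center hs]
  have hc2 : ⁅x, y⁆ ^ 2 = 1 := commutatorElement_sq_eq_one (hG.sq_mem_center_s16 h4) h4 x y
  have hs : ∀ s ∈ center G, s ^ 2 ≠ 1 → s ^ 2 = ⁅x, y⁆ := fun s hs hs2 => by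
    have hmem := mul_mem (inv_mem (hy 1 (one_mem _))) (hy s hs)
    rw [mul_one, mul_sq_of_mem_center hs, inv_mul_cancel_left] at hmem
    exact (eq_one_or_eq_of_mem_zpowers hc2 hmem).resolve_left hs2
  exact hzw ((hs z hz hz2).trans (hs w hw hw2).symm)

theorem exists_sq_eq_of_mem_frattini_center {a : center G}
    (ha : a ∈ frattini (center G)) : ∃ z : center G, z ^ 2 = a := by
  open scoped IsMulCommutative in
  exact frattini_le_of_forall_sq_mem (K := (powMonoidHom 2 : center G →* center G).range)
    (fun g => ⟨g, rfl⟩) ha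

end

/-- **Lemma 4.11**: if `H` is a nonabelian good group of exponent 4, then the Frattini
subgroup of its centre has order at most 2. -/
theorem good_exponent_four_frattini_center (H : Type*) [Group H] (hgood : IsGood H)
    (hna : ¬ ∀ a b : H, a * b = b * a) (hexp : Monoid.exponent H = 4) :
    ∀ a ∈ frattini ↥(Subgroup.center H), ∀ b ∈ frattini ↥(Subgroup.center H),
      a ≠ 1 → b ≠ 1 → a = b := by
  intro a ha b hb ha1 hb1
  have h4 : ∀ x : H, x ^ 4 = 1 := fun x => hexp ▸ Monoid.pow_exponent_eq_one x
  push Not at hna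
  obtain ⟨x, y, hxy⟩ := hna
  obtain ⟨z, rfl⟩ := exists_sq_eq_of_mem_frattini_center ha
  obtain ⟨w, rfl⟩ := exists_sq_eq_of_mem_frattini_center hb
  have hsq_ne {s : center H} (hs : s ^ 2 ≠ 1) : (s : H) ^ 2 ≠ 1 := by
    exact_mod_cast hs
  exact Subtype.ext <| by
    exact_mod_cast hgood.sq_eq_sq_of_mem_center h4
      (mt commutatorElement_eq_one_iff_commute.mp hxy) z.2 w.2 (hsq_ne ha1) (hsq_ne hb1)
end
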